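/- arXiv:2604.05143 — 5 statements merged into one kernel-verified Lean document; each statement's English description precedes it below -/
import Mathlib

section
/- Local solvability (Lemma 1): for every Φ₀ > 0 there exists u₀ > 0 such that the Volterra equation (★) has a unique continuous solution g on [0, u₀], i.e., there is exactly one continuous g : [0, u₀] → ℝ satisfying g(u) = μ u^{−γ} e^{α/u} ∫₀ᵘ t^{γ−2} e^{−α/t} (Φ₀ F̄(t) + (Bg)(t)) dt for all u ∈ (0, u₀]; moreover this solution satisfies g(0) = (μ/α) Φ₀. -/
open MeasureTheory Filter Set Topology

/-- Tail of a distribution function. -/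
noncomputable def Fbar (F : ℝ → ℝ) (x : ℝ) : ℝ := 1 - F x

/-- `F` is the distribution function of a positive random variable: nondecreasing,
right-continuous, vanishing on `(-∞, 0]`, tending to `1` at `+∞`. -/
def IsCDF (F : ℝ → ℝ) : Prop :=
  Monotone F ∧ (∀ x, ContinuousWithinAt F (Set.Ici x) x) ∧
    (∀ x ≤ 0, F x = 0) ∧ Tendsto F atTop (𝓝 1)

/-- The convolution operator `(Bg)(t) = ∫₀ᵗ g(t-y) F̄(y) dy`. -/
noncomputable def Bop (F g : ℝ → ℝ) (t : ℝ) : ℝ :=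
  ∫ y in (0:ℝ)..t, g (t - y) * Fbar F y

/-- `g` is a continuous solution of the Volterra equation (★) on `[0, ∞)`. -/
def IsVolterraSol (γ α μ Φ₀ : ℝ) (F g : ℝ → ℝ) : Prop :=
  ContinuousOn g (Set.Ici 0) ∧
  ∀ u : ℝ, 0 < u → g u = μ * u ^ (-γ) * Real.exp (α / u) *
    ∫ t in (0:ℝ)..u, t ^ (γ - 2) * Real.exp (-α / t) * (Φ₀ * Fbar F t + Bop F g t)

/-!
Write (★) as `g = T g`, `(T g)(u) = μ (∫₀ᵘ w_{γ-2} f) / w_γ(u)` with `f = Φ₀ F̄ + B g` and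
`w_c(t) = t ^ c e^{-α/t}`. Since `w_c' = c w_{c-1} + α w_{c-2}`, integrating from `0` gives
`α ∫₀ᵘ w_{c-2} ≤ w_c(u)` for `c ≥ 0`. Hence the normalized weight has mass at most `1/α`, mass
tending to `1/α` as `u → 0⁺`, and integrates `t` to at most `u / α`. As
`|B g₁ - B g₂|(t) ≤ t ‖g₁ - g₂‖`, `T` is a contraction of `C([0, u₀])` with constant `μ u₀ / α`,
and Banach's fixed point theorem gives existence and uniqueness for `u₀ < α / μ`. At `0` a
continuous solution takes the limit of `(T g)(u)` as `u → 0⁺`, which is `μ Φ₀ / α` because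
`f(t) → Φ₀` (`F` is right-continuous with `F 0 = 0`, and `B g (t) = O(t)`).
-/

/-- The `if` avoids the junk value `0 ^ c * exp (-α / 0) = 0 ^ c` at `t = 0`, so that the weight
is continuous for `α > 0`. -/
noncomputable def expWeight (α c t : ℝ) : ℝ := if t ≤ 0 then 0 else t ^ c * Real.exp (-α / t)

namespace expWeight

variable {α c t : ℝ}

theorem of_pos (ht : 0 < t) : expWeight α c t = t ^ c * Real.exp (-α / t) := if_neg ht.not_ge

theorem of_nonpos (ht : t ≤ 0) : expWeight α c t = 0 := if_pos ht

theorem pos (ht : 0 < t) : 0 < expWeight α c t := by rw [of_pos ht]; positivity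

theorem nonneg (α c t : ℝ) : 0 ≤ expWeight α c t := by
  rcases le_or_gt t 0 with ht | ht
  · rw [of_nonpos ht]
  · exact (pos ht).le

theorem add_eq_rpow_mul (α c k t : ℝ) : expWeight α (c + k) t = t ^ k * expWeight α c t := by
  rcases le_or_gt t 0 with ht | ht
  · rw [of_nonpos ht, of_nonpos ht, mul_zero]
  · rw [of_pos ht, of_pos ht, Real.rpow_add ht]; ring

theorem tendsto_nhdsGT_zero (hα : 0 < α) (c : ℝ) :
    Tendsto (fun t => t ^ c * Real.exp (-α / t)) (𝓝[>] 0) (𝓝 0) := by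
  -- substitute `s = t⁻¹`: exponential decay beats any power
  refine ((tendsto_rpow_mul_exp_neg_mul_atTop_nhds_zero (-c) α hα).comp
    tendsto_inv_nhdsGT_zero).congr' ?_
  filter_upwards [self_mem_nhdsWithin] with t (ht : 0 < t)
  simp [Real.inv_rpow ht.le, ← Real.rpow_neg ht.le, div_eq_mul_inv]

theorem continuous (hα : 0 < α) : Continuous (expWeight α c) := by
  refine continuous_iff_continuousAt.2 fun x => ?_
  rcases lt_trichotomy x 0 with hx | rfl | hx
  · exact continuousAt_const.congr <| by
      filter_upwards [Iio_mem_nhds hx] with y hy using (of_nonpos (le_of_lt hy)).symm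
  · rw [ContinuousAt, ← nhdsLE_sup_nhdsGT, tendsto_sup, of_nonpos le_rfl]
    constructor
    · exact tendsto_const_nhds.congr' <| by
        filter_upwards [self_mem_nhdsWithin] with y hy using (of_nonpos hy).symm
    · exact (tendsto_nhdsGT_zero hα c).congr' <| by
        filter_upwards [self_mem_nhdsWithin] with y hy using (of_pos hy).symm
  · refine ContinuousAt.congr ?_ (by
      filter_upwards [Ioi_mem_nhds hx] with y hy using (of_pos hy).symm)
    exact (Real.continuousAt_rpow_const x c (Or.inl hx.ne')).mul
      (Real.continuous_exp.continuousAt.comp (continuousAt_const.div continuousAt_id hx.ne'))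

theorem hasDerivAt (α c : ℝ) (ht : 0 < t) :
    HasDerivAt (expWeight α c) (c * expWeight α (c - 1) t + α * expWeight α (c - 2) t) t := by
  have hpow : HasDerivAt (fun s : ℝ => s ^ c) (c * t ^ (c - 1)) t :=
    Real.hasDerivAt_rpow_const (Or.inl ht.ne')
  have hexp : HasDerivAt (fun s : ℝ => Real.exp (-α / s)) (Real.exp (-α / t) * (α / t ^ 2)) t := by
    have : HasDerivAt (fun s : ℝ => -α / s) (α / t ^ 2) t := by
      simpa [div_eq_mul_inv, neg_div] using (hasDerivAt_inv ht.ne').const_mul (-α)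
    exact this.exp
  refine ((hpow.mul hexp).congr_of_eventuallyEq ?_).congr_deriv ?_
  · filter_upwards [Ioi_mem_nhds ht] with s hs using of_pos hs
  · rw [of_pos ht, of_pos ht, Real.rpow_sub ht, Real.rpow_sub ht, Real.rpow_one,
      Real.rpow_two]
    field_simp

theorem integral_sub_two (hα : 0 < α) (c : ℝ) {u : ℝ} (hu : 0 ≤ u) :
    α * ∫ t in (0:ℝ)..u, expWeight α (c - 2) t =
      expWeight α c u - c * ∫ t in (0:ℝ)..u, expWeight α (c - 1) t := by
  have hint : ∀ c', IntervalIntegrable (expWeight α c') volume 0 u :=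
    fun c' => (continuous hα).intervalIntegrable 0 u
  have hFTC := intervalIntegral.integral_eq_sub_of_hasDerivAt_of_le hu
    (continuous hα).continuousOn (fun t ht => hasDerivAt α c ht.1)
    (((hint _).const_mul c).add ((hint _).const_mul α))
  rw [intervalIntegral.integral_add ((hint _).const_mul c) ((hint _).const_mul α),
    intervalIntegral.integral_const_mul, intervalIntegral.integral_const_mul,
    of_nonpos le_rfl, sub_zero] at hFTC
  linarith

theorem integral_sub_two_le (hα : 0 < α) (hc : 0 ≤ c) {u : ℝ} (hu : 0 ≤ u) :
    ∫ t in (0:ℝ)..u, expWeight α (c - 2) t ≤ expWeight α c u / α := by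
  have hnonneg : 0 ≤ c * ∫ t in (0:ℝ)..u, expWeight α (c - 1) t :=
    mul_nonneg hc (intervalIntegral.integral_nonneg hu fun t _ => nonneg α _ t)
  rw [le_div_iff₀ hα, mul_comm]
  linarith [integral_sub_two hα c hu]

end expWeight

/-- `μ * kernelAvg γ α f u` is the right-hand side of (★) for `f = Φ₀ F̄ + B g`. -/
noncomputable def kernelAvg (γ α : ℝ) (f : ℝ → ℝ) (u : ℝ) : ℝ :=
  (∫ t in (0:ℝ)..u, expWeight α (γ - 2) t * f t) / expWeight α γ u

namespace kernelAvg

variable {γ α : ℝ} {f f₁ f₂ : ℝ → ℝ} {u : ℝ}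

theorem const_mul (c : ℝ) (f : ℝ → ℝ) (u : ℝ) :
    kernelAvg γ α (fun t => c * f t) u = c * kernelAvg γ α f u := by
  simp only [kernelAvg, mul_left_comm _ c, intervalIntegral.integral_const_mul, mul_div_assoc]

theorem sub (hα : 0 < α) (hf₁ : IntervalIntegrable f₁ volume 0 u)
    (hf₂ : IntervalIntegrable f₂ volume 0 u) :
    kernelAvg γ α f₁ u - kernelAvg γ α f₂ u = kernelAvg γ α (fun t => f₁ t - f₂ t) u := by
  have hw := (expWeight.continuous (c := γ - 2) hα).continuousOn (s := uIcc 0 u)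
  simp only [kernelAvg, ← sub_div, mul_sub,
    intervalIntegral.integral_sub (hf₁.continuousOn_mul hw) (hf₂.continuousOn_mul hw)]

theorem abs_le (hα : 0 < α) {k D : ℝ} (hγk : 0 ≤ γ + k) (hu : 0 < u)
    (hf : ∀ t ∈ Ioc 0 u, |f t| ≤ D * t ^ k) :
    |kernelAvg γ α f u| ≤ D * u ^ k / α := by
  have hD : 0 ≤ D := nonneg_of_mul_nonneg_left ((abs_nonneg _).trans (hf u ⟨hu, le_rfl⟩))
    (by positivity)
  have hweight : ∀ t, expWeight α (γ - 2) t * (D * t ^ k) = D * expWeight α (γ + k - 2) t :=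
    fun t => by rw [show γ + k - 2 = γ - 2 + k by ring, expWeight.add_eq_rpow_mul]; ring
  have hnum : ‖∫ t in (0:ℝ)..u, expWeight α (γ - 2) t * f t‖ ≤ D * (expWeight α (γ + k) u / α) :=
    calc ‖∫ t in (0:ℝ)..u, expWeight α (γ - 2) t * f t‖
        ≤ ∫ t in (0:ℝ)..u, expWeight α (γ - 2) t * (D * t ^ k) := by
          refine intervalIntegral.norm_integral_le_of_norm_le hu.le (ae_of_all _ fun t ht => ?_)
            ?_
          · rw [norm_mul, Real.norm_of_nonneg (expWeight.nonneg _ _ _)]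
            exact mul_le_mul_of_nonneg_left (hf t ht) (expWeight.nonneg _ _ _)
          · simp only [hweight]
            exact ((expWeight.continuous hα).intervalIntegrable 0 u).const_mul D
      _ = D * ∫ t in (0:ℝ)..u, expWeight α (γ + k - 2) t := by
          simp only [hweight, intervalIntegral.integral_const_mul]
      _ ≤ D * (expWeight α (γ + k) u / α) := by
          gcongr; exact expWeight.integral_sub_two_le hα hγk hu.le
  rw [kernelAvg, abs_div, abs_of_pos (expWeight.pos hu), div_le_iff₀ (expWeight.pos hu),
    ← Real.norm_eq_abs]
  rw [expWeight.add_eq_rpow_mul] at hnum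
  exact hnum.trans_eq (by ring)

theorem tendsto_one (hα : 0 < α) (hγ : 0 ≤ γ + 1) :
    Tendsto (kernelAvg γ α fun _ => 1) (𝓝[>] 0) (𝓝 α⁻¹) := by
  have hlin : Tendsto (kernelAvg γ α fun t => t) (𝓝[>] 0) (𝓝 0) := by
    refine squeeze_zero_norm' ?_ (by simpa using (tendsto_nhdsWithin_of_tendsto_nhds
      (continuous_id.tendsto (0:ℝ))).div_const α)
    filter_upwards [self_mem_nhdsWithin] with u (hu : 0 < u)
    simpa using abs_le hα (k := 1) (D := 1) hγ hu fun t ht => by simp [abs_of_pos ht.1]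
  have hmass : ∀ u > 0,
      kernelAvg γ α (fun _ => 1) u = α⁻¹ - γ / α * kernelAvg γ α (fun t => t) u := by
    intro u hu
    have hW := (expWeight.pos (α := α) (c := γ) hu).ne'
    have hFTC := expWeight.integral_sub_two hα γ hu.le
    have hshift : ∀ t, expWeight α (γ - 1) t = expWeight α (γ - 2) t * t := fun t => by
      rw [show γ - 1 = γ - 2 + 1 by ring, expWeight.add_eq_rpow_mul, Real.rpow_one, mul_comm]
    simp only [hshift] at hFTC
    simp only [kernelAvg, mul_one]
    field_simp
    linarith
  refine (by simpa using (hlin.const_mul (γ / α)).const_sub α⁻¹ :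
    Tendsto (fun u => α⁻¹ - γ / α * kernelAvg γ α (fun t => t) u) (𝓝[>] 0) (𝓝 α⁻¹)).congr' ?_
  filter_upwards [self_mem_nhdsWithin] with u hu using (hmass u hu).symm

theorem tendsto (hα : 0 < α) (hγ : 0 ≤ γ) {L : ℝ} (hf : Tendsto f (𝓝[>] 0) (𝓝 L))
    (hfi : ∀ u > 0, IntervalIntegrable f volume 0 u) :
    Tendsto (kernelAvg γ α f) (𝓝[>] 0) (𝓝 (L / α)) := by
  have hdev : Tendsto (kernelAvg γ α fun t => f t - L) (𝓝[>] 0) (𝓝 0) := by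
    refine Metric.tendsto_nhds.2 fun ε hε => ?_
    obtain ⟨δ, hδ, hclose⟩ := (nhdsGT_basis (0:ℝ)).eventually_iff.1
      (Metric.tendsto_nhds.1 hf (ε * α / 2) (by positivity))
    filter_upwards [Ioo_mem_nhdsGT hδ] with u hu
    have := abs_le hα (k := 0) (D := ε * α / 2) (by simpa using hγ) hu.1 fun t ht => by
      simpa [Real.dist_eq] using (hclose ⟨ht.1, ht.2.trans_lt hu.2⟩).le
    rw [Real.dist_eq, sub_zero]
    calc _ ≤ ε * α / 2 * u ^ (0:ℝ) / α := this
      _ < ε := by rw [Real.rpow_zero]; field_simp; linarith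
  have hsplit : ∀ u > 0, kernelAvg γ α f u =
      L * kernelAvg γ α (fun _ => 1) u + kernelAvg γ α (fun t => f t - L) u := by
    intro u hu
    rw [← sub (f₂ := fun _ => L) hα (hfi u hu) intervalIntegrable_const, ← const_mul]
    simp
  have hlim : Tendsto (fun u => L * kernelAvg γ α (fun _ => 1) u +
      kernelAvg γ α (fun t => f t - L) u) (𝓝[>] 0) (𝓝 (L / α)) := by
    simpa [div_eq_mul_inv] using ((tendsto_one hα (by linarith)).const_mul L).add hdev
  refine hlim.congr' ?_
  filter_upwards [self_mem_nhdsWithin] with u hu using (hsplit u hu).symm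

theorem continuousOn (hα : 0 < α) (hfi : ∀ u > 0, IntervalIntegrable f volume 0 u) :
    ContinuousOn (kernelAvg γ α f) (Ioi 0) := by
  intro u (hu : 0 < u)
  have hint : IntegrableOn (fun t => expWeight α (γ - 2) t * f t) (uIcc 0 (u + 1)) := by
    rw [← intervalIntegrable_iff']
    exact (hfi (u + 1) (by linarith)).continuousOn_mul (expWeight.continuous hα).continuousOn
  have hprim := (intervalIntegral.continuousOn_primitive_interval hint).continuousAt
    (uIcc_of_le (by linarith : (0:ℝ) ≤ u + 1) ▸ Icc_mem_nhds hu (by linarith))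
  exact (hprim.div (expWeight.continuous hα).continuousAt (expWeight.pos hu).ne').continuousWithinAt

end kernelAvg

namespace IsCDF

variable {F : ℝ → ℝ}

theorem nonneg (hF : IsCDF F) (x : ℝ) : 0 ≤ F x := by
  rcases le_total x 0 with hx | hx
  · rw [hF.2.2.1 x hx]
  · exact hF.2.2.1 0 le_rfl ▸ hF.1 hx

theorem le_one (hF : IsCDF F) (x : ℝ) : F x ≤ 1 :=
  hF.1.ge_of_tendsto hF.2.2.2 x

theorem antitone_Fbar (hF : IsCDF F) : Antitone (Fbar F) :=
  fun _ _ hxy => sub_le_sub_left (hF.1 hxy) 1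

theorem abs_Fbar_le_one (hF : IsCDF F) (x : ℝ) : |Fbar F x| ≤ 1 := by
  rw [Fbar, abs_le]
  constructor <;> linarith [hF.nonneg x, hF.le_one x]

theorem tendsto_Fbar_nhdsGT_zero (hF : IsCDF F) : Tendsto (Fbar F) (𝓝[>] 0) (𝓝 1) := by
  have hright : Tendsto F (𝓝[>] 0) (𝓝 0) := by
    have := (hF.2.1 0).tendsto.mono_left (nhdsWithin_mono _ Ioi_subset_Ici_self)
    rwa [hF.2.2.1 0 le_rfl] at this
  have := hright.const_sub 1
  rwa [sub_zero] at this

end IsCDF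

namespace Bop

variable {F h h₁ h₂ : ℝ → ℝ} {t : ℝ}

theorem intervalIntegrable_integrand (hF : IsCDF F) (hh : Continuous h) (t : ℝ) :
    IntervalIntegrable (fun y => h (t - y) * Fbar F y) volume 0 t :=
  hF.antitone_Fbar.intervalIntegrable.continuousOn_mul (by fun_prop)

theorem sub (hF : IsCDF F) (hh₁ : Continuous h₁) (hh₂ : Continuous h₂) (t : ℝ) :
    Bop F h₁ t - Bop F h₂ t = Bop F (fun x => h₁ x - h₂ x) t := by
  simp only [Bop, sub_mul, intervalIntegral.integral_sub (intervalIntegrable_integrand hF hh₁ t)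
    (intervalIntegrable_integrand hF hh₂ t)]

theorem abs_le (hF : IsCDF F) {M : ℝ} (ht : 0 ≤ t) (hM : ∀ x ∈ Icc 0 t, |h x| ≤ M) :
    |Bop F h t| ≤ M * t := by
  have hbound : ∀ y ∈ uIoc (0:ℝ) t, ‖h (t - y) * Fbar F y‖ ≤ M := by
    intro y hy
    rw [uIoc_of_le ht] at hy
    rw [norm_mul, Real.norm_eq_abs, Real.norm_eq_abs]
    exact (mul_le_of_le_one_right (abs_nonneg _) (hF.abs_Fbar_le_one y)).trans
      (hM _ ⟨by linarith [hy.2], by linarith [hy.1]⟩)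
  simpa [Bop, abs_of_nonneg ht] using intervalIntegral.norm_integral_le_of_norm_le_const hbound

theorem congr (ht : 0 ≤ t) (heq : EqOn h₁ h₂ (Icc 0 t)) : Bop F h₁ t = Bop F h₂ t := by
  refine intervalIntegral.integral_congr fun y hy => ?_
  rw [uIcc_of_le ht] at hy
  simp only [heq ⟨sub_nonneg.2 hy.2, by linarith [hy.1]⟩]

theorem apply_zero (F h : ℝ → ℝ) : Bop F h 0 = 0 := intervalIntegral.integral_same

theorem continuousAt_indicator_Iic_apply {k : ℝ → ℝ → ℝ} (hk : ∀ y, Continuous fun t => k t y)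
    {y t₀ : ℝ} (hy : y ≠ t₀) : ContinuousAt (fun t => (Iic t).indicator (k t) y) t₀ := by
  rcases hy.lt_or_gt with hlt | hgt
  · refine ((hk y).continuousAt).congr ?_
    filter_upwards [Ioi_mem_nhds hlt] with t (ht : y < t)
    rw [indicator_of_mem (mem_Iic.2 ht.le)]
  · refine (continuousAt_const (y := (0:ℝ))).congr ?_
    filter_upwards [Iio_mem_nhds hgt] with t (ht : t < y)
    rw [indicator_of_notMem (notMem_Iic.2 ht)]

theorem eq_integral_indicator {b : ℝ} (ht : t ∈ Icc 0 b) :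
    Bop F h t = ∫ y in (0:ℝ)..b, (Iic t).indicator (fun y => h (t - y) * Fbar F y) y := by
  rw [Bop, intervalIntegral.integral_of_le ht.1, intervalIntegral.integral_of_le (ht.1.trans ht.2),
    setIntegral_indicator measurableSet_Iic, Ioc_inter_Iic, inf_eq_right.2 ht.2]

/-- Dominated convergence on the fixed interval `[0, t₀ + 1]`, via `eq_integral_indicator`. -/
theorem continuousOn (hF : IsCDF F) (hh : Continuous h) : ContinuousOn (Bop F h) (Ici 0) := by
  intro t₀ (ht₀ : 0 ≤ t₀)
  set b := t₀ + 1
  obtain ⟨M, hM⟩ := (isCompact_Icc (a := (0:ℝ)) (b := b)).exists_bound_of_continuousOn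
    hh.continuousOn
  have hnear : ∀ᶠ t in 𝓝[Ici 0] t₀, t ∈ Icc 0 b := by
    filter_upwards [self_mem_nhdsWithin, nhdsWithin_le_nhds (Iio_mem_nhds (by linarith : t₀ < b))]
      with t ht hb using ⟨ht, le_of_lt hb⟩
  refine ContinuousWithinAt.congr_of_eventuallyEq ?_ (hnear.mono fun t => eq_integral_indicator)
    (eq_integral_indicator ⟨ht₀, by linarith⟩)
  refine intervalIntegral.continuousWithinAt_of_dominated_interval (bound := fun _ => M)
    (Eventually.of_forall fun t => ?_) (hnear.mono fun t ht => ae_of_all _ fun y hy => ?_)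
    intervalIntegrable_const ?_
  · exact (((hh.comp (continuous_const.sub continuous_id)).measurable.mul
      hF.antitone_Fbar.measurable).indicator measurableSet_Iic).aestronglyMeasurable
  · rw [uIoc_of_le (by linarith)] at hy
    by_cases hyt : y ≤ t
    · rw [indicator_of_mem (mem_Iic.2 hyt), norm_mul]
      exact (mul_le_of_le_one_right (norm_nonneg _) (hF.abs_Fbar_le_one y)).trans
        (hM _ ⟨sub_nonneg.2 hyt, by linarith [hy.1, ht.2]⟩)
    · rw [indicator_of_notMem (notMem_Iic.2 (not_le.1 hyt)), norm_zero]
      exact (norm_nonneg _).trans (hM 0 ⟨le_rfl, by linarith⟩)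
  · filter_upwards [measure_eq_zero_iff_ae_notMem.1 (Real.volume_singleton (a := t₀))]
      with y (hy : y ≠ t₀) _
    exact (continuousAt_indicator_Iic_apply (fun y => by fun_prop) hy).continuousWithinAt

end Bop

/-- The right-hand side of (★), extended to `u ≤ 0` by its limit at `0⁺`. -/
noncomputable def volterraMap (γ α μ Φ₀ : ℝ) (F h : ℝ → ℝ) (u : ℝ) : ℝ :=
  if u ≤ 0 then μ / α * Φ₀ else μ * kernelAvg γ α (fun t => Φ₀ * Fbar F t + Bop F h t) u

namespace volterraMap

variable {γ α μ Φ₀ : ℝ} {F h h₁ h₂ : ℝ → ℝ} {u : ℝ}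

theorem of_nonpos (hu : u ≤ 0) : volterraMap γ α μ Φ₀ F h u = μ / α * Φ₀ := if_pos hu

theorem of_pos (hu : 0 < u) :
    volterraMap γ α μ Φ₀ F h u = μ * u ^ (-γ) * Real.exp (α / u) *
      ∫ t in (0:ℝ)..u, t ^ (γ - 2) * Real.exp (-α / t) * (Φ₀ * Fbar F t + Bop F h t) := by
  have hint : ∫ t in (0:ℝ)..u, expWeight α (γ - 2) t * (Φ₀ * Fbar F t + Bop F h t) =
      ∫ t in (0:ℝ)..u, t ^ (γ - 2) * Real.exp (-α / t) * (Φ₀ * Fbar F t + Bop F h t) := by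
    rw [intervalIntegral.integral_of_le hu.le, intervalIntegral.integral_of_le hu.le]
    exact setIntegral_congr_fun measurableSet_Ioc fun t ht => by rw [expWeight.of_pos ht.1]
  rw [volterraMap, if_neg hu.not_ge, kernelAvg, hint, expWeight.of_pos hu, Real.rpow_neg hu.le,
    neg_div, Real.exp_neg]
  field_simp

theorem congr (hu : 0 ≤ u) (heq : EqOn h₁ h₂ (Icc 0 u)) :
    volterraMap γ α μ Φ₀ F h₁ u = volterraMap γ α μ Φ₀ F h₂ u := by
  have hint : ∫ t in (0:ℝ)..u, expWeight α (γ - 2) t * (Φ₀ * Fbar F t + Bop F h₁ t) =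
      ∫ t in (0:ℝ)..u, expWeight α (γ - 2) t * (Φ₀ * Fbar F t + Bop F h₂ t) :=
    intervalIntegral.integral_congr fun t ht => by
      rw [uIcc_of_le hu] at ht
      rw [Bop.congr ht.1 (heq.mono (Icc_subset_Icc_right ht.2))]
  simp only [volterraMap, kernelAvg, hint]

theorem intervalIntegrable_forcing (hF : IsCDF F) (hh : Continuous h) (hu : 0 ≤ u) :
    IntervalIntegrable (fun t => Φ₀ * Fbar F t + Bop F h t) volume 0 u :=
  (hF.antitone_Fbar.intervalIntegrable.const_mul Φ₀).add
    ((Bop.continuousOn hF hh).mono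
      (by simp [uIcc_of_le hu, Icc_subset_Ici_self])).intervalIntegrable

theorem continuousOn (hα : 0 < α) (hγ : 0 ≤ γ) (hF : IsCDF F) (hh : Continuous h) :
    ContinuousOn (volterraMap γ α μ Φ₀ F h) (Ici 0) := by
  have hfi := fun u (hu : 0 < u) => intervalIntegrable_forcing (Φ₀ := Φ₀) hF hh hu.le
  intro u (hu : 0 ≤ u)
  rcases hu.eq_or_lt with rfl | hu
  · have hB : Tendsto (Bop F h) (𝓝[>] 0) (𝓝 0) := by
      have := (Bop.continuousOn hF hh 0 (mem_Ici.2 le_rfl)).mono Ioi_subset_Ici_self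
      rwa [ContinuousWithinAt, Bop.apply_zero] at this
    have hforcing : Tendsto (fun t => Φ₀ * Fbar F t + Bop F h t) (𝓝[>] 0) (𝓝 Φ₀) := by
      simpa using (hF.tendsto_Fbar_nhdsGT_zero.const_mul Φ₀).add hB
    rw [← continuousWithinAt_Ioi_iff_Ici, ContinuousWithinAt, of_nonpos le_rfl,
      div_mul_eq_mul_div, mul_div_assoc]
    refine ((kernelAvg.tendsto hα hγ hforcing hfi).const_mul μ).congr' ?_
    filter_upwards [self_mem_nhdsWithin] with v (hv : 0 < v) using (if_neg hv.not_ge).symm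
  · have hcont :
        ContinuousAt (fun v => μ * kernelAvg γ α (fun t => Φ₀ * Fbar F t + Bop F h t) v) u :=
      continuousAt_const.mul ((kernelAvg.continuousOn hα hfi).continuousAt (Ioi_mem_nhds hu))
    refine (hcont.congr ?_).continuousWithinAt
    filter_upwards [Ioi_mem_nhds hu] with v (hv : 0 < v) using (if_neg hv.not_ge).symm

theorem abs_sub_le (hα : 0 < α) (hγ : 0 ≤ γ + 1) (hμ : 0 ≤ μ) (hF : IsCDF F)
    (hh₁ : Continuous h₁) (hh₂ : Continuous h₂) {D : ℝ} (hu : 0 ≤ u)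
    (hD : ∀ x ∈ Icc 0 u, |h₁ x - h₂ x| ≤ D) :
    |volterraMap γ α μ Φ₀ F h₁ u - volterraMap γ α μ Φ₀ F h₂ u| ≤ μ * u / α * D := by
  rcases hu.eq_or_lt with rfl | hu
  · simp [of_nonpos]
  have hdiff : (fun t => (Φ₀ * Fbar F t + Bop F h₁ t) - (Φ₀ * Fbar F t + Bop F h₂ t)) =
      Bop F fun x => h₁ x - h₂ x := by
    funext t; rw [← Bop.sub hF hh₁ hh₂]; ring
  have hB : ∀ t ∈ Ioc 0 u, |Bop F (fun x => h₁ x - h₂ x) t| ≤ D * t ^ (1:ℝ) := fun t ht => by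
    rw [Real.rpow_one]
    exact Bop.abs_le hF ht.1.le fun x hx => hD x ⟨hx.1, hx.2.trans ht.2⟩
  rw [volterraMap, volterraMap, if_neg hu.not_ge, if_neg hu.not_ge, ← mul_sub,
    kernelAvg.sub hα (intervalIntegrable_forcing hF hh₁ hu.le)
      (intervalIntegrable_forcing hF hh₂ hu.le), hdiff, abs_mul, abs_of_nonneg hμ]
  calc μ * |kernelAvg γ α (Bop F fun x => h₁ x - h₂ x) u| ≤ μ * (D * u ^ (1:ℝ) / α) := by
        gcongr; exact kernelAvg.abs_le hα hγ hu hB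
    _ = μ * u / α * D := by rw [Real.rpow_one]; ring

end volterraMap

section FixedPoint

variable {γ α μ Φ₀ : ℝ} {F : ℝ → ℝ} {u₀ : ℝ}

/-- `IccExtend` only serves to feed `volterraMap` a continuous function on `ℝ`; its values off
`[0, u₀]` do not matter, by `volterraMap.congr`. -/
noncomputable def volterraOp (hα : 0 < α) (hγ : 0 ≤ γ) (hF : IsCDF F) (hu₀ : 0 ≤ u₀) :
    C(Icc 0 u₀, ℝ) → C(Icc 0 u₀, ℝ) := fun φ =>
  ⟨(Icc 0 u₀).domRestrict (volterraMap γ α μ Φ₀ F (IccExtend hu₀ φ)),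
    ((volterraMap.continuousOn hα hγ hF φ.continuous.Icc_extend').mono
      Icc_subset_Ici_self).domRestrict⟩

theorem volterraOp_apply (hα : 0 < α) (hγ : 0 ≤ γ) (hF : IsCDF F) (hu₀ : 0 ≤ u₀)
    (φ : C(Icc 0 u₀, ℝ)) (x : Icc (0:ℝ) u₀) :
    volterraOp (μ := μ) (Φ₀ := Φ₀) hα hγ hF hu₀ φ x =
      volterraMap γ α μ Φ₀ F (IccExtend hu₀ φ) x := rfl

theorem contractingWith_volterraOp (hα : 0 < α) (hγ : 0 ≤ γ) (hμ : 0 ≤ μ) (hF : IsCDF F)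
    (hu₀ : 0 ≤ u₀) (hsmall : μ * u₀ < α) :
    ContractingWith (Real.toNNReal (μ * u₀ / α)) (volterraOp (μ := μ) (Φ₀ := Φ₀) hα hγ hF hu₀) := by
  have hK : 0 ≤ μ * u₀ / α := by positivity
  refine ⟨by rw [Real.toNNReal_lt_one, div_lt_one hα]; exact hsmall,
    LipschitzWith.of_dist_le_mul fun φ₁ φ₂ => ?_⟩
  rw [Real.coe_toNNReal _ hK]
  refine (ContinuousMap.dist_le (by positivity)).2 fun x => ?_
  rw [volterraOp_apply, volterraOp_apply, Real.dist_eq]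
  refine (volterraMap.abs_sub_le (Φ₀ := Φ₀) (D := dist φ₁ φ₂) hα (by linarith) hμ hF
    φ₁.continuous.Icc_extend' φ₂.continuous.Icc_extend' x.2.1 fun y _ => ?_).trans ?_
  · rw [IccExtend_apply, IccExtend_apply, ← Real.dist_eq]
    exact ContinuousMap.dist_apply_le_dist _
  · gcongr; exact x.2.2

theorem eqOn_IccExtend_domRestrict {a b : ℝ} (hab : a ≤ b) {g : ℝ → ℝ}
    (hg : ContinuousOn g (Icc a b)) :
    EqOn g (IccExtend hab (⟨(Icc a b).domRestrict g, hg.domRestrict⟩ : C(Icc a b, ℝ))) (Icc a b) :=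
  fun _ hx => by rw [IccExtend_of_mem hab _ hx]; rfl

def IsLocalVolterraSol (γ α μ Φ₀ : ℝ) (F : ℝ → ℝ) (u₀ : ℝ) (g : ℝ → ℝ) : Prop :=
  (∀ x ∉ Set.Icc (0:ℝ) u₀, g x = 0) ∧ ContinuousOn g (Set.Icc 0 u₀) ∧
    ∀ u ∈ Set.Ioc (0:ℝ) u₀, g u = μ * u ^ (-γ) * Real.exp (α / u) *
      ∫ t in (0:ℝ)..u, t ^ (γ - 2) * Real.exp (-α / t) * (Φ₀ * Fbar F t + Bop F g t)

namespace IsLocalVolterraSol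

variable {g : ℝ → ℝ}

theorem eq_volterraMap (hg : IsLocalVolterraSol γ α μ Φ₀ F u₀ g) {h : ℝ → ℝ}
    (hgh : EqOn g h (Icc 0 u₀)) {u : ℝ} (hu : u ∈ Ioc 0 u₀) :
    g u = volterraMap γ α μ Φ₀ F h u := by
  rw [hg.2.2 u hu, ← volterraMap.of_pos hu.1]
  exact volterraMap.congr hu.1.le (hgh.mono (Icc_subset_Icc_right hu.2))

/-- `g` and the continuous map `volterraMap … h` agree on `(0, u₀]`, hence also at `0`. -/
theorem apply_zero (hα : 0 < α) (hγ : 0 ≤ γ) (hF : IsCDF F) (hu₀ : 0 < u₀)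
    (hg : IsLocalVolterraSol γ α μ Φ₀ F u₀ g) : g 0 = μ / α * Φ₀ := by
  set φ : C(Icc 0 u₀, ℝ) := ⟨(Icc 0 u₀).domRestrict g, hg.2.1.domRestrict⟩
  have hgh : EqOn g (IccExtend hu₀.le φ) (Icc 0 u₀) := eqOn_IccExtend_domRestrict hu₀.le hg.2.1
  have := left_nhdsWithin_Ioc_neBot hu₀
  have hg0 : Tendsto g (𝓝[Ioc 0 u₀] 0) (𝓝 (g 0)) :=
    (hg.2.1 0 (left_mem_Icc.2 hu₀.le)).mono Ioc_subset_Icc_self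
  have hV : Tendsto (volterraMap γ α μ Φ₀ F (IccExtend hu₀.le φ)) (𝓝[Ioc 0 u₀] 0)
      (𝓝 (μ / α * Φ₀)) := by
    have := (volterraMap.continuousOn (μ := μ) (Φ₀ := Φ₀) hα hγ hF
      (φ.continuous.Icc_extend' (h := hu₀.le)) 0 (mem_Ici.2 le_rfl)).mono
      (Ioc_subset_Icc_self.trans Icc_subset_Ici_self : Ioc 0 u₀ ⊆ Ici 0)
    rwa [ContinuousWithinAt, volterraMap.of_nonpos le_rfl] at this
  refine tendsto_nhds_unique hg0 (hV.congr' ?_)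
  filter_upwards [self_mem_nhdsWithin] with u hu using (hg.eq_volterraMap hgh hu).symm

theorem isFixedPt (hα : 0 < α) (hγ : 0 ≤ γ) (hF : IsCDF F) (hu₀ : 0 < u₀)
    (hg : IsLocalVolterraSol γ α μ Φ₀ F u₀ g) :
    Function.IsFixedPt (volterraOp (μ := μ) (Φ₀ := Φ₀) hα hγ hF hu₀.le)
      ⟨(Icc 0 u₀).domRestrict g, hg.2.1.domRestrict⟩ := by
  ext ⟨x, hx⟩
  rw [volterraOp_apply]
  rcases hx.1.eq_or_lt with rfl | hpos
  · rw [volterraMap.of_nonpos le_rfl]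
    exact (hg.apply_zero hα hγ hF hu₀).symm
  · exact (hg.eq_volterraMap (eqOn_IccExtend_domRestrict hu₀.le hg.2.1) ⟨hpos, hx.2⟩).symm

end IsLocalVolterraSol

theorem isLocalVolterraSol_of_isFixedPt (hα : 0 < α) (hγ : 0 ≤ γ) (hF : IsCDF F) (hu₀ : 0 ≤ u₀)
    {φ : C(Icc 0 u₀, ℝ)} (hφ : Function.IsFixedPt (volterraOp (μ := μ) (Φ₀ := Φ₀) hα hγ hF hu₀) φ) :
    IsLocalVolterraSol γ α μ Φ₀ F u₀ fun x => if hx : x ∈ Icc 0 u₀ then φ ⟨x, hx⟩ else 0 := by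
  have hext : EqOn (IccExtend hu₀ φ) (fun x => if hx : x ∈ Icc 0 u₀ then φ ⟨x, hx⟩ else 0)
      (Icc 0 u₀) := fun x hx => by simp [IccExtend_of_mem _ _ hx, hx]
  refine ⟨fun x hx => dif_neg hx, φ.continuous.Icc_extend'.continuousOn.congr hext.symm,
    fun u hu => ?_⟩
  have hmem : u ∈ Icc 0 u₀ := Ioc_subset_Icc_self hu
  calc _ = φ ⟨u, hmem⟩ := dif_pos hmem
    _ = volterraMap γ α μ Φ₀ F (IccExtend hu₀ φ) u := (DFunLike.congr_fun hφ ⟨u, hmem⟩).symm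
    _ = _ := volterraMap.congr hu.1.le (hext.mono (Icc_subset_Icc_right hu.2))
    _ = _ := volterraMap.of_pos hu.1

theorem existsUnique_isLocalVolterraSol (hα : 0 < α) (hγ : 0 ≤ γ) (hμ : 0 ≤ μ) (hF : IsCDF F)
    (hu₀ : 0 < u₀) (hsmall : μ * u₀ < α) : ∃! g, IsLocalVolterraSol γ α μ Φ₀ F u₀ g := by
  have hT := contractingWith_volterraOp (Φ₀ := Φ₀) hα hγ hμ hF hu₀.le hsmall
  refine ExistsUnique.intro _
    (isLocalVolterraSol_of_isFixedPt hα hγ hF hu₀.le hT.fixedPoint_isFixedPt)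
    fun g hg => funext fun x => ?_
  have hfix := hT.fixedPoint_unique (hg.isFixedPt hα hγ hF hu₀)
  by_cases hx : x ∈ Icc 0 u₀
  · rw [dif_pos hx, ← hfix]; rfl
  · rw [dif_neg hx, hg.1 x hx]

end FixedPoint

theorem stmt1_general (γ α μ : ℝ) (hγ : 1 < γ) (hα : 0 < α) (hμ : 0 < μ)
    (F : ℝ → ℝ) (hF : IsCDF F) (Φ₀ : ℝ) :
    ∃ u₀ : ℝ, 0 < u₀ ∧
      (∃! g : ℝ → ℝ, (∀ x ∉ Set.Icc (0:ℝ) u₀, g x = 0) ∧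
        ContinuousOn g (Set.Icc 0 u₀) ∧
        ∀ u ∈ Set.Ioc (0:ℝ) u₀, g u = μ * u ^ (-γ) * Real.exp (α / u) *
          ∫ t in (0:ℝ)..u, t ^ (γ - 2) * Real.exp (-α / t) * (Φ₀ * Fbar F t + Bop F g t)) ∧
      ∀ g : ℝ → ℝ, ((∀ x ∉ Set.Icc (0:ℝ) u₀, g x = 0) ∧
        ContinuousOn g (Set.Icc 0 u₀) ∧
        ∀ u ∈ Set.Ioc (0:ℝ) u₀, g u = μ * u ^ (-γ) * Real.exp (α / u) *
          ∫ t in (0:ℝ)..u, t ^ (γ - 2) * Real.exp (-α / t) * (Φ₀ * Fbar F t + Bop F g t)) →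
        g 0 = μ / α * Φ₀ := by
  have hγ₀ : 0 ≤ γ := by linarith
  have hu₀ : 0 < α / (2 * μ) := by positivity
  have hsmall : μ * (α / (2 * μ)) < α := by
    field_simp; linarith
  exact ⟨α / (2 * μ), hu₀, existsUnique_isLocalVolterraSol hα hγ₀ hμ.le hF hu₀ hsmall,
    fun g hg => IsLocalVolterraSol.apply_zero hα hγ₀ hF hu₀ hg⟩

theorem stmt1 (γ α μ : ℝ) (hγ : 1 < γ) (hα : 0 < α) (hμ : 0 < μ)
    (F : ℝ → ℝ) (hF : IsCDF F) (Φ₀ : ℝ) (hΦ₀ : 0 < Φ₀) :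
    ∃ u₀ : ℝ, 0 < u₀ ∧
      (∃! g : ℝ → ℝ, (∀ x ∉ Set.Icc (0:ℝ) u₀, g x = 0) ∧
        ContinuousOn g (Set.Icc 0 u₀) ∧
        ∀ u ∈ Set.Ioc (0:ℝ) u₀, g u = μ * u ^ (-γ) * Real.exp (α / u) *
          ∫ t in (0:ℝ)..u, t ^ (γ - 2) * Real.exp (-α / t) * (Φ₀ * Fbar F t + Bop F g t)) ∧
      ∀ g : ℝ → ℝ, ((∀ x ∉ Set.Icc (0:ℝ) u₀, g x = 0) ∧
        ContinuousOn g (Set.Icc 0 u₀) ∧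
        ∀ u ∈ Set.Ioc (0:ℝ) u₀, g u = μ * u ^ (-γ) * Real.exp (α / u) *
          ∫ t in (0:ℝ)..u, t ^ (γ - 2) * Real.exp (-α / t) * (Φ₀ * Fbar F t + Bop F g t)) →
        g 0 = μ / α * Φ₀ :=
  stmt1_general γ α μ hγ hα hμ F hF Φ₀
end

section
/- Uniform boundedness (Lemma 2): suppose ε ∈ (0,1) and C₀ > 0 satisfy F̄(z) ≤ C₀ z^{−ε} for all z > 0, and let g be a continuous solution of the Volterra equation (★) on [0, ∞). Then g is uniformly bounded: sup_{u ≥ 0} |g(u)| < ∞. -/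
open MeasureTheory Filter Set Topology

/-!
Since `F̄(y) ≤ C₀ y^{-ε}` is integrable at `0`, a bound `|g| ≤ M` on `[0, u]` gives
`|(Bg)(t)| ≤ M C₀ t^{1-ε} / (1-ε)` for `t ≤ u`; together with `e^{-α/t} ≤ t/α` this bounds the
right-hand side of (★) at `u ≥ 1` by `(K₁ + K₂ M) u^{-ε}`. Once `K₂ u^{-ε} ≤ 1/2`, evaluating (★) at
a point where `|g|` is maximal on `[0, u]` gives `max |g| ≤ 2 K₁` there, and on the remaining
compact initial segment `g` is bounded by continuity.
-/

open Real

lemma Fbar_nonneg {F : ℝ → ℝ} (hF : IsCDF F) (x : ℝ) : 0 ≤ Fbar F x :=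
  sub_nonneg.2 (hF.1.ge_of_tendsto hF.2.2.2 x)

lemma exp_neg_div_le_div {α t : ℝ} (hα : 0 < α) (ht : 0 < t) : exp (-α / t) ≤ t / α := by
  have h := inv_anti₀ (div_pos hα ht)
    ((le_add_of_nonneg_right zero_le_one).trans (add_one_le_exp (α / t)))
  rwa [inv_div, ← exp_neg, ← neg_div] at h

lemma abs_intervalIntegral_le_of_abs_le_rpow {f : ℝ → ℝ} {c r u : ℝ} (hr : -1 < r)
    (hu : 0 ≤ u) (hf : ∀ t ∈ Ioc 0 u, |f t| ≤ c * t ^ r) :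
    |∫ t in (0:ℝ)..u, f t| ≤ c / (r + 1) * u ^ (r + 1) := by
  calc |∫ t in (0:ℝ)..u, f t| ≤ ∫ t in (0:ℝ)..u, c * t ^ r := by
        rw [← Real.norm_eq_abs]
        exact intervalIntegral.norm_integral_le_of_norm_le hu (ae_of_all _ hf)
          ((intervalIntegral.intervalIntegrable_rpow' hr).const_mul c)
    _ = c / (r + 1) * u ^ (r + 1) := by
        rw [intervalIntegral.integral_const_mul, integral_rpow (Or.inl hr),
          zero_rpow (by linarith : 0 < r + 1).ne']
        ring

section Volterra

variable {γ α μ Φ₀ ε C₀ M : ℝ} {F g : ℝ → ℝ}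

lemma abs_Bop_le {t : ℝ} (hF : IsCDF F) (hε : ε < 1)
    (htail : ∀ z : ℝ, 0 < z → Fbar F z ≤ C₀ * z ^ (-ε)) (ht : 0 ≤ t)
    (hgM : ∀ v ∈ Icc 0 t, |g v| ≤ M) :
    |Bop F g t| ≤ M * C₀ / (1 - ε) * t ^ (1 - ε) := by
  have hM : 0 ≤ M := (abs_nonneg _).trans (hgM 0 ⟨le_rfl, ht⟩)
  have h := abs_intervalIntegral_le_of_abs_le_rpow (f := fun y => g (t - y) * Fbar F y)
    (c := M * C₀) (by linarith : -1 < -ε) ht fun y hy => by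
      rw [abs_mul, abs_of_nonneg (Fbar_nonneg hF y), mul_assoc]
      exact mul_le_mul (hgM _ ⟨sub_nonneg.2 hy.2, by linarith [hy.1]⟩) (htail y hy.1)
        (Fbar_nonneg hF y) hM
  rwa [neg_add_eq_sub] at h

lemma abs_volterra_integrand_le {t : ℝ} (hα : 0 < α) (hΦ₀ : 0 ≤ Φ₀) (hF : IsCDF F)
    (hε : ε < 1) (htail : ∀ z : ℝ, 0 < z → Fbar F z ≤ C₀ * z ^ (-ε)) (ht : 0 < t)
    (hgM : ∀ v ∈ Icc 0 t, |g v| ≤ M) :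
    |t ^ (γ - 2) * exp (-α / t) * (Φ₀ * Fbar F t + Bop F g t)|
      ≤ (Φ₀ * C₀ / α + M * C₀ / (1 - ε)) * t ^ (γ - ε - 1) := by
  have hΦF : 0 ≤ Φ₀ * Fbar F t := mul_nonneg hΦ₀ (Fbar_nonneg hF t)
  have hweighted : exp (-α / t) * |Φ₀ * Fbar F t + Bop F g t|
      ≤ (Φ₀ * C₀ / α + M * C₀ / (1 - ε)) * t ^ (1 - ε) :=
    calc exp (-α / t) * |Φ₀ * Fbar F t + Bop F g t|
        ≤ exp (-α / t) * (Φ₀ * Fbar F t) + exp (-α / t) * |Bop F g t| := by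
          rw [← mul_add]
          gcongr
          exact (abs_add_le _ _).trans_eq (by rw [abs_of_nonneg hΦF])
      _ ≤ t / α * (Φ₀ * (C₀ * t ^ (-ε))) + 1 * (M * C₀ / (1 - ε) * t ^ (1 - ε)) := by
          gcongr
          · exact exp_neg_div_le_div hα ht
          · exact htail t ht
          · exact exp_le_one_iff.2 (div_nonpos_of_nonpos_of_nonneg (by linarith) ht.le)
          · exact abs_Bop_le hF hε htail ht.le hgM
      _ = (Φ₀ * C₀ / α + M * C₀ / (1 - ε)) * t ^ (1 - ε) := by
          rw [rpow_sub ht, rpow_neg ht.le, rpow_one]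
          field_simp
  calc |t ^ (γ - 2) * exp (-α / t) * (Φ₀ * Fbar F t + Bop F g t)|
      = t ^ (γ - 2) * (exp (-α / t) * |Φ₀ * Fbar F t + Bop F g t|) := by
        rw [abs_mul, abs_mul, abs_of_nonneg (rpow_nonneg ht.le _), abs_of_pos (exp_pos _),
          mul_assoc]
    _ ≤ t ^ (γ - 2) * ((Φ₀ * C₀ / α + M * C₀ / (1 - ε)) * t ^ (1 - ε)) := by gcongr
    _ = (Φ₀ * C₀ / α + M * C₀ / (1 - ε)) * t ^ (γ - ε - 1) := by
        rw [mul_left_comm, ← rpow_add ht, show γ - 2 + (1 - ε) = γ - ε - 1 by ring]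

lemma abs_le_of_isVolterraSol {u : ℝ} (hγ : ε < γ) (hα : 0 < α) (hμ : 0 ≤ μ) (hΦ₀ : 0 ≤ Φ₀)
    (hF : IsCDF F) (hε : ε < 1) (htail : ∀ z : ℝ, 0 < z → Fbar F z ≤ C₀ * z ^ (-ε))
    (hg : IsVolterraSol γ α μ Φ₀ F g) (hu : 1 ≤ u) (hgM : ∀ v ∈ Icc 0 u, |g v| ≤ M) :
    |g u| ≤ μ * exp α / (γ - ε) * (Φ₀ * C₀ / α + M * C₀ / (1 - ε)) * u ^ (-ε) := by
  have hu0 : 0 < u := one_pos.trans_le hu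
  set A := Φ₀ * C₀ / α + M * C₀ / (1 - ε)
  have hI := abs_intervalIntegral_le_of_abs_le_rpow (by linarith : -1 < γ - ε - 1) hu0.le
    fun t ht => abs_volterra_integrand_le (γ := γ) hα hΦ₀ hF hε htail ht.1
      fun v hv => hgM v ⟨hv.1, hv.2.trans ht.2⟩
  rw [sub_add_cancel] at hI
  have hexp : exp (α / u) ≤ exp α := exp_le_exp.2 (div_le_self hα.le hu)
  rw [hg.2 u hu0, abs_mul, abs_of_nonneg (by positivity)]
  calc μ * u ^ (-γ) * exp (α / u)
        * |∫ t in (0:ℝ)..u, t ^ (γ - 2) * exp (-α / t) * (Φ₀ * Fbar F t + Bop F g t)|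
      ≤ μ * u ^ (-γ) * exp α * (A / (γ - ε) * u ^ (γ - ε)) := by gcongr
    _ = μ * exp α / (γ - ε) * A * (u ^ (-γ) * u ^ (γ - ε)) := by ring
    _ = μ * exp α / (γ - ε) * A * u ^ (-ε) := by
        rw [← rpow_add hu0, show -γ + (γ - ε) = -ε by ring]

end Volterra

lemma exists_abs_le_of_abs_le_add_mul_sup {g : ℝ → ℝ} (hg : ContinuousOn g (Ici 0))
    {U K θ : ℝ} (hθ : θ < 1)
    (h : ∀ u ≥ U, ∀ M, (∀ v ∈ Icc 0 u, |g v| ≤ M) → |g u| ≤ K + θ * M) :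
    ∃ M, ∀ u, 0 ≤ u → |g u| ≤ M := by
  obtain ⟨C, hC⟩ := isCompact_Icc.exists_bound_of_continuousOn
    (hg.mono (Icc_subset_Ici_self : Icc 0 U ⊆ Ici 0))
  refine ⟨max C (K / (1 - θ)), fun u hu => ?_⟩
  obtain ⟨v, hv, hmax⟩ := isCompact_Icc.exists_isMaxOn
    (nonempty_Icc.2 (hu.trans (le_max_left u U)))
    (hg.mono (Icc_subset_Ici_self : Icc 0 (max u U) ⊆ Ici 0)).abs
  refine (hmax ⟨hu, le_max_left u U⟩ : |g u| ≤ |g v|).trans ?_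
  rcases le_or_gt v U with hvU | hUv
  · exact (hC v ⟨hv.1, hvU⟩).trans (le_max_left _ _)
  · have hself := h v hUv.le (|g v|) fun w hw => hmax ⟨hw.1, hw.2.trans hv.2⟩
    exact le_max_of_le_right ((le_div_iff₀ (sub_pos.2 hθ)).2 (by linarith))

theorem stmt5 (γ α μ : ℝ) (hγ : 1 < γ) (hα : 0 < α) (hμ : 0 < μ)
    (F : ℝ → ℝ) (hF : IsCDF F) (Φ₀ : ℝ) (hΦ₀ : 0 < Φ₀)
    (ε C₀ : ℝ) (hε : ε ∈ Set.Ioo (0:ℝ) 1) (hC₀ : 0 < C₀)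
    (htail : ∀ z : ℝ, 0 < z → Fbar F z ≤ C₀ * z ^ (-ε))
    (g : ℝ → ℝ) (hg : IsVolterraSol γ α μ Φ₀ F g) :
    ∃ M : ℝ, ∀ u : ℝ, 0 ≤ u → |g u| ≤ M := by
  obtain ⟨hε0, hε1⟩ := hε
  have hγε : 0 < γ - ε := by linarith
  set K₁ := μ * exp α / (γ - ε) * (Φ₀ * C₀ / α)
  set K₂ := μ * exp α / (γ - ε) * (C₀ / (1 - ε))
  obtain ⟨U, hU⟩ : ∃ U, ∀ u ≥ U, 1 ≤ u ∧ K₂ * u ^ (-ε) ≤ 1 / 2 :=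
    ((eventually_ge_atTop 1).and (((tendsto_rpow_neg_atTop hε0).const_mul K₂).eventually
      (ge_mem_nhds (by norm_num)))).exists_forall_of_atTop
  refine exists_abs_le_of_abs_le_add_mul_sup (U := U) (K := K₁) hg.1 (by norm_num : (1 / 2 : ℝ) < 1)
    fun u hu M hgM => ?_
  obtain ⟨hu1, hK₂u⟩ := hU u hu
  have hM : 0 ≤ M := (abs_nonneg _).trans (hgM 0 ⟨le_rfl, by linarith⟩)
  calc |g u| ≤ μ * exp α / (γ - ε) * (Φ₀ * C₀ / α + M * C₀ / (1 - ε)) * u ^ (-ε) :=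
        abs_le_of_isVolterraSol (by linarith) hα hμ.le hΦ₀.le hF hε1 htail hg hu1 hgM
    _ = K₁ * u ^ (-ε) + K₂ * u ^ (-ε) * M := by ring
    _ ≤ K₁ * 1 + 1 / 2 * M := by
        gcongr
        exact rpow_le_one_of_one_le_of_nonpos hu1 (by linarith)
    _ = K₁ + 1 / 2 * M := by rw [mul_one]
end

section
/- Absolute integrability (Lemma 3): suppose ε ∈ (0,1) with γ − 1 − ε > 0 and C₀ > 0 with F̄(z) ≤ C₀ z^{−ε} for all z > 0, and let g be a continuous solution of the Volterra equation (★) on [0, ∞). Then there exist C > 0 and U > 0 such that |g(u)| ≤ C u^{−1−ε} for all u ≥ U; in particular g is Lebesgue integrable on (0, ∞): ∫₀^∞ |g(u)| du < ∞. -/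
/-!
Write `φ = Φ₀ F̄ + B g`. Since `exp (-α / t) ≤ exp (-α / u)` for `t ≤ u`, a bound
`|φ t| ≤ K t^(-a)` on `(0, u]` with `a < γ - 1` gives `|g u| ≤ |μ| K / (γ - 1 - a) · u^(-(a + 1))`.

With `N = max_{[0, u]} |g|` the tail bound gives `|B g t| ≤ N C₀ t^(1 - ε) / (1 - ε)`, hence
`|g u| ≤ A + N / 2` for large `u`, and `g` is bounded. If moreover `|g v| ≤ D v^(-δ)`, splitting
`B g t` at `t / 2` gives `|B g t| = O(t^(-ε) + t^(1 - ε - δ))`, where the `t^(-ε)` term comes from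
`∫₀^∞ |g| < ∞` when `δ > 1`. So the decay exponent improves from `δ` to `min (δ + ε) (1 + ε)`;
starting from `δ = 0` and stepping over `δ = 1`, where `∫₀ᵗ |g|` may grow like `log t`, it
reaches `1 + ε`.
-/

open MeasureTheory Filter Set Topology

open Real

namespace IsCDF

variable {F : ℝ → ℝ}

lemma fbar_nonneg (hF : IsCDF F) (x : ℝ) : 0 ≤ Fbar F x :=
  sub_nonneg.2 (hF.1.ge_of_tendsto hF.2.2.2 x)

lemma fbar_le_one (hF : IsCDF F) (x : ℝ) : Fbar F x ≤ 1 := by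
  have : F (min x 0) ≤ F x := hF.1 (min_le_left x 0)
  rw [hF.2.2.1 _ (min_le_right x 0)] at this
  simpa [Fbar] using this

lemma measurable_fbar (hF : IsCDF F) : Measurable (Fbar F) :=
  measurable_const.sub hF.1.measurable

end IsCDF

lemma integral_Ioc_zero_rpow {c u : ℝ} (hc : -1 < c) (hu : 0 ≤ u) :
    ∫ t in Ioc 0 u, t ^ c = u ^ (c + 1) / (c + 1) := by
  rw [← intervalIntegral.integral_of_le hu, integral_rpow (Or.inl hc),
    zero_rpow (by linarith), sub_zero]

lemma integrableOn_Ioc_zero_rpow {c u : ℝ} (hc : -1 < c) :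
    IntegrableOn (fun t : ℝ => t ^ c) (Ioc 0 u) :=
  (intervalIntegral.intervalIntegrable_rpow' hc).1

lemma abs_volterra_integral_le {γ α μ a b K₁ K₂ u : ℝ} {φ : ℝ → ℝ} (hα : 0 ≤ α) (hu : 0 < u)
    (ha : a < γ - 1) (hb : b < γ - 1)
    (hφ : ∀ t ∈ Ioc 0 u, |φ t| ≤ K₁ * t ^ (-a) + K₂ * t ^ (-b)) :
    |μ * u ^ (-γ) * exp (α / u) * ∫ t in (0:ℝ)..u, t ^ (γ - 2) * exp (-α / t) * φ t|
      ≤ |μ| * K₁ / (γ - 1 - a) * u ^ (-(a + 1)) + |μ| * K₂ / (γ - 1 - b) * u ^ (-(b + 1)) := by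
  set h : ℝ → ℝ := fun t => exp (-α / u) * (K₁ * t ^ (γ - 2 - a) + K₂ * t ^ (γ - 2 - b))
  have hpt : ∀ t ∈ Ioc 0 u, |t ^ (γ - 2) * exp (-α / t) * φ t| ≤ h t := by
    intro t ht
    have ht0 : 0 < t := ht.1
    have hexp : exp (-α / t) ≤ exp (-α / u) :=
      exp_le_exp.2 (by rw [neg_div, neg_div, neg_le_neg_iff]; gcongr; exact ht.2)
    calc |t ^ (γ - 2) * exp (-α / t) * φ t| = t ^ (γ - 2) * exp (-α / t) * |φ t| := by
          rw [abs_mul, abs_of_nonneg (by positivity)]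
      _ ≤ t ^ (γ - 2) * exp (-α / u) * (K₁ * t ^ (-a) + K₂ * t ^ (-b)) := by
          gcongr
          exact hφ t ht
      _ = h t := by
          simp only [h, sub_eq_add_neg _ a, sub_eq_add_neg _ b, rpow_add ht0]; ring
  have hint (c : ℝ) (hc : c < γ - 1) : IntegrableOn (fun t => t ^ (γ - 2 - c)) (Ioc 0 u) :=
    integrableOn_Ioc_zero_rpow (by linarith)
  have hval (c : ℝ) (hc : c < γ - 1) :
      ∫ t in Ioc 0 u, t ^ (γ - 2 - c) = u ^ (γ - 1 - c) / (γ - 1 - c) := by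
    rw [integral_Ioc_zero_rpow (by linarith) hu.le, show γ - 2 - c + 1 = γ - 1 - c by ring]
  have hbound : |∫ t in (0:ℝ)..u, t ^ (γ - 2) * exp (-α / t) * φ t| ≤ ∫ t in Ioc 0 u, h t := by
    rw [intervalIntegral.integral_of_le hu.le]
    refine abs_integral_le_integral_abs.trans (integral_mono_of_nonneg
      (ae_of_all _ fun _ => abs_nonneg _) ?_ (ae_restrict_of_forall_mem measurableSet_Ioc hpt))
    exact (((hint a ha).const_mul K₁).add ((hint b hb).const_mul K₂)).const_mul _
  have hh : ∫ t in Ioc 0 u, h t = exp (-α / u) *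
      (K₁ * (u ^ (γ - 1 - a) / (γ - 1 - a)) + K₂ * (u ^ (γ - 1 - b) / (γ - 1 - b))) := by
    rw [integral_const_mul, integral_add ((hint a ha).const_mul K₁) ((hint b hb).const_mul K₂),
      integral_const_mul, integral_const_mul, hval a ha, hval b hb]
  have hpow (c : ℝ) : u ^ (-γ) * u ^ (γ - 1 - c) = u ^ (-(c + 1)) := by
    rw [← rpow_add hu]; ring_nf
  rw [abs_mul, abs_mul, abs_mul, abs_of_pos (exp_pos _), abs_of_pos (rpow_pos_of_pos hu _)]
  calc |μ| * u ^ (-γ) * exp (α / u) * |∫ t in (0:ℝ)..u, t ^ (γ - 2) * exp (-α / t) * φ t|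
      ≤ |μ| * u ^ (-γ) * exp (α / u) * ∫ t in Ioc 0 u, h t := by gcongr
    _ = |μ| * (exp (α / u) * exp (-α / u)) * (K₁ / (γ - 1 - a) * (u ^ (-γ) * u ^ (γ - 1 - a))
          + K₂ / (γ - 1 - b) * (u ^ (-γ) * u ^ (γ - 1 - b))) := by rw [hh]; ring
    _ = _ := by rw [← exp_add, neg_div, add_neg_cancel, exp_zero, mul_one, hpow, hpow]; ring

def DecayBound (g : ℝ → ℝ) (δ : ℝ) : Prop :=
  ∃ D, ∀ v, 0 < v → |g v| ≤ D * v ^ (-δ)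

section Decay

variable {g : ℝ → ℝ} {δ D : ℝ}

lemma nonneg_of_abs_le_mul_rpow (hD : ∀ v, 0 < v → |g v| ≤ D * v ^ (-δ)) : 0 ≤ D := by
  simpa using (abs_nonneg _).trans (hD 1 one_pos)

lemma DecayBound.of_abs_le_add {C₁ C₂ a b m : ℝ} (h₀ : DecayBound g 0)
    (h : ∀ v, 0 < v → |g v| ≤ C₁ * v ^ (-a) + C₂ * v ^ (-b))
    (hm : 0 ≤ m) (ha : m ≤ a) (hb : m ≤ b) : DecayBound g m := by
  obtain ⟨M, hM⟩ := h₀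
  have hM₀ : 0 ≤ M := nonneg_of_abs_le_mul_rpow hM
  refine ⟨max M (|C₁| + |C₂|), fun v hv => ?_⟩
  rcases le_total v 1 with hv1 | hv1
  · calc |g v| ≤ M := by simpa using hM v hv
      _ ≤ max M (|C₁| + |C₂|) * 1 := by simp
      _ ≤ max M (|C₁| + |C₂|) * v ^ (-m) := by
          gcongr
          exact Real.one_le_rpow_of_pos_of_le_one_of_nonpos hv hv1 (by linarith)
  · calc |g v| ≤ C₁ * v ^ (-a) + C₂ * v ^ (-b) := h v hv
      _ ≤ |C₁| * v ^ (-m) + |C₂| * v ^ (-m) := by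
          gcongr
          · exact (le_abs_self _).trans (by gcongr)
          · exact (le_abs_self _).trans (by gcongr)
      _ ≤ max M (|C₁| + |C₂|) * v ^ (-m) := by
          rw [← add_mul]; gcongr; exact le_max_right _ _

lemma DecayBound.integrableOn_Ioi (hg : ContinuousOn g (Ici 0)) (h : DecayBound g δ)
    (hδ : 1 < δ) : IntegrableOn g (Ioi 0) := by
  obtain ⟨D, hD⟩ := h
  rw [← Ioc_union_Ioi_eq_Ioi zero_le_one]
  refine IntegrableOn.union ((hg.mono Icc_subset_Ici_self).integrableOn_Icc.mono_set
    Ioc_subset_Icc_self) ?_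
  have hIoi : Ioi (1 : ℝ) ⊆ Ici 0 := fun v hv => mem_Ici.2 (zero_lt_one.trans hv).le
  refine ((integrableOn_Ioi_rpow_of_lt (by linarith : -δ < -1) one_pos).const_mul D).mono'
    ((hg.mono hIoi).aestronglyMeasurable measurableSet_Ioi) ?_
  exact ae_restrict_of_forall_mem measurableSet_Ioi fun v hv => hD v (zero_lt_one.trans hv)

end Decay

section Convolution

variable {F g : ℝ → ℝ} {ε C₀ δ : ℝ}

lemma abs_bop_le (hF : IsCDF F) {t : ℝ} (ht : 0 ≤ t) :
    |Bop F g t| ≤ ∫ y in Ioc 0 t, |g (t - y)| * Fbar F y := by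
  rw [Bop, intervalIntegral.integral_of_le ht]
  refine abs_integral_le_integral_abs.trans_eq (integral_congr_ae (ae_of_all _ fun y => ?_))
  simp only [abs_mul, abs_of_nonneg (hF.fbar_nonneg y)]

lemma integrableOn_abs_comp_sub_mul_fbar (hF : IsCDF F) (hg : ContinuousOn g (Ici 0))
    {t : ℝ} : IntegrableOn (fun y => |g (t - y)| * Fbar F y) (Ioc 0 t) := by
  have hcont : ContinuousOn (fun y => |g (t - y)|) (Icc 0 t) :=
    (hg.comp (continuousOn_const.sub continuousOn_id) fun y hy => sub_nonneg.2 hy.2).abs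
  refine (hcont.integrableOn_Icc.mono_set Ioc_subset_Icc_self).mul_bdd
    hF.measurable_fbar.aestronglyMeasurable (c := 1) (ae_of_all _ fun y => ?_)
  rw [Real.norm_eq_abs, abs_of_nonneg (hF.fbar_nonneg y)]
  exact hF.fbar_le_one y

lemma abs_bop_le_of_abs_le (hF : IsCDF F) (hε : ε < 1)
    (htail : ∀ z, 0 < z → Fbar F z ≤ C₀ * z ^ (-ε)) {t N : ℝ} (ht : 0 ≤ t)
    (hN : ∀ v ∈ Icc 0 t, |g v| ≤ N) :
    |Bop F g t| ≤ N * C₀ / (1 - ε) * t ^ (-(ε - 1)) := by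
  refine (abs_bop_le hF ht).trans ?_
  have hpt : ∀ y ∈ Ioc 0 t, |g (t - y)| * Fbar F y ≤ N * (C₀ * y ^ (-ε)) := fun y hy => by
    have hgy := hN (t - y) ⟨sub_nonneg.2 hy.2, by linarith [hy.1]⟩
    exact mul_le_mul hgy (htail y hy.1) (hF.fbar_nonneg y) ((abs_nonneg _).trans hgy)
  calc ∫ y in Ioc 0 t, |g (t - y)| * Fbar F y ≤ ∫ y in Ioc 0 t, N * (C₀ * y ^ (-ε)) :=
        integral_mono_of_nonneg (ae_of_all _ fun y => mul_nonneg (abs_nonneg _) (hF.fbar_nonneg y))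
          (((integrableOn_Ioc_zero_rpow (by linarith)).const_mul C₀).const_mul N)
          (ae_restrict_of_forall_mem measurableSet_Ioc hpt)
    _ = N * C₀ / (1 - ε) * t ^ (-(ε - 1)) := by
        rw [integral_const_mul, integral_const_mul, integral_Ioc_zero_rpow (by linarith) ht,
          show -ε + 1 = 1 - ε by ring, show -(ε - 1) = 1 - ε by ring]
        ring

lemma integral_head_le (hF : IsCDF F) (hε : ε < 1)
    (htail : ∀ z, 0 < z → Fbar F z ≤ C₀ * z ^ (-ε)) {t D : ℝ} (ht : 0 < t) (hδ : 0 ≤ δ)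
    (hD : ∀ v, 0 < v → |g v| ≤ D * v ^ (-δ)) :
    ∫ y in Ioc 0 (t / 2), |g (t - y)| * Fbar F y
      ≤ D * C₀ / (1 - ε) * (t / 2) ^ (-(ε + δ - 1)) := by
  have ht2 : 0 < t / 2 := half_pos ht
  have hpt : ∀ y ∈ Ioc 0 (t / 2), |g (t - y)| * Fbar F y
      ≤ D * (t / 2) ^ (-δ) * (C₀ * y ^ (-ε)) := fun y hy => by
    have hty : t / 2 ≤ t - y := by linarith [hy.2]
    have hgy : |g (t - y)| ≤ D * (t / 2) ^ (-δ) :=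
      (hD _ (ht2.trans_le hty)).trans (mul_le_mul_of_nonneg_left
        (Real.rpow_le_rpow_of_nonpos ht2 hty (neg_nonpos.2 hδ)) (nonneg_of_abs_le_mul_rpow hD))
    exact mul_le_mul hgy (htail y hy.1) (hF.fbar_nonneg y) ((abs_nonneg _).trans hgy)
  calc ∫ y in Ioc 0 (t / 2), |g (t - y)| * Fbar F y
      ≤ ∫ y in Ioc 0 (t / 2), D * (t / 2) ^ (-δ) * (C₀ * y ^ (-ε)) :=
        integral_mono_of_nonneg (ae_of_all _ fun y => mul_nonneg (abs_nonneg _) (hF.fbar_nonneg y))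
          (((integrableOn_Ioc_zero_rpow (by linarith)).const_mul C₀).const_mul _)
          (ae_restrict_of_forall_mem measurableSet_Ioc hpt)
    _ = D * C₀ / (1 - ε) * ((t / 2) ^ (-δ) * (t / 2) ^ (-ε + 1)) := by
        rw [integral_const_mul, integral_const_mul, integral_Ioc_zero_rpow (by linarith) ht2.le,
          show -ε + 1 = 1 - ε by ring]
        ring
    _ = D * C₀ / (1 - ε) * (t / 2) ^ (-(ε + δ - 1)) := by
        rw [← Real.rpow_add ht2]; ring_nf

lemma integral_tail_le (hF : IsCDF F) (hε : 0 ≤ ε) (hC₀ : 0 ≤ C₀)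
    (htail : ∀ z, 0 < z → Fbar F z ≤ C₀ * z ^ (-ε)) (hg : ContinuousOn g (Ici 0)) {t : ℝ}
    (ht : 0 < t) :
    ∫ y in Ioc (t / 2) t, |g (t - y)| * Fbar F y
      ≤ C₀ * (t / 2) ^ (-ε) * ∫ s in Ioc 0 (t / 2), |g s| := by
  have ht2 : 0 < t / 2 := half_pos ht
  have hpt : ∀ y ∈ Ioc (t / 2) t, |g (t - y)| * Fbar F y ≤ C₀ * (t / 2) ^ (-ε) * |g (t - y)| :=
    fun y hy => by
      rw [mul_comm]
      gcongr
      exact (htail y (ht2.trans hy.1)).trans (mul_le_mul_of_nonneg_left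
        (Real.rpow_le_rpow_of_nonpos ht2 hy.1.le (neg_nonpos.2 hε)) hC₀)
  have hcont : ContinuousOn (fun y => |g (t - y)|) (Icc (t / 2) t) :=
    (hg.comp (continuousOn_const.sub continuousOn_id) fun y hy => sub_nonneg.2 hy.2).abs
  calc ∫ y in Ioc (t / 2) t, |g (t - y)| * Fbar F y
      ≤ ∫ y in Ioc (t / 2) t, C₀ * (t / 2) ^ (-ε) * |g (t - y)| :=
        integral_mono_of_nonneg (ae_of_all _ fun y => mul_nonneg (abs_nonneg _) (hF.fbar_nonneg y))
          ((hcont.integrableOn_Icc.mono_set Ioc_subset_Icc_self).const_mul _)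
          (ae_restrict_of_forall_mem measurableSet_Ioc hpt)
    _ = C₀ * (t / 2) ^ (-ε) * ∫ s in Ioc 0 (t / 2), |g s| := by
        rw [integral_const_mul, ← intervalIntegral.integral_of_le (by linarith),
          ← intervalIntegral.integral_of_le ht2.le,
          intervalIntegral.integral_comp_sub_left (fun s => |g s|), sub_self, sub_half]

lemma abs_bop_le_head_add_tail (hF : IsCDF F) (hg : ContinuousOn g (Ici 0)) {t : ℝ}
    (ht : 0 < t) :
    |Bop F g t| ≤ (∫ y in Ioc 0 (t / 2), |g (t - y)| * Fbar F y)
      + ∫ y in Ioc (t / 2) t, |g (t - y)| * Fbar F y := by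
  have hint := integrableOn_abs_comp_sub_mul_fbar hF hg (t := t)
  rw [← setIntegral_union (Ioc_disjoint_Ioc_of_le le_rfl) measurableSet_Ioc
    (hint.mono_set (Ioc_subset_Ioc_right (by linarith)))
    (hint.mono_set (Ioc_subset_Ioc_left (by linarith))),
    Ioc_union_Ioc_eq_Ioc (by linarith) (by linarith)]
  exact abs_bop_le hF ht.le

lemma DecayBound.exists_integral_abs_le (hg : ContinuousOn g (Ici 0)) (h : DecayBound g δ)
    (hδ : δ ≠ 1) : ∃ K₁ K₂, ∀ m, 0 < m → ∫ s in Ioc 0 m, |g s| ≤ K₁ + K₂ * m ^ (1 - δ) := by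
  rcases hδ.lt_or_gt with hδ | hδ
  · obtain ⟨D, hD⟩ := h
    refine ⟨0, D / (1 - δ), fun m hm => ?_⟩
    calc ∫ s in Ioc 0 m, |g s| ≤ ∫ s in Ioc 0 m, D * s ^ (-δ) :=
          integral_mono_of_nonneg (ae_of_all _ fun _ => abs_nonneg _)
            ((integrableOn_Ioc_zero_rpow (by linarith)).const_mul D)
            (ae_restrict_of_forall_mem measurableSet_Ioc fun s hs => hD s hs.1)
      _ = 0 + D / (1 - δ) * m ^ (1 - δ) := by
          rw [integral_const_mul, integral_Ioc_zero_rpow (by linarith) hm.le,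
            show -δ + 1 = 1 - δ by ring]
          ring
  · refine ⟨∫ s in Ioi 0, |g s|, 0, fun m _ => ?_⟩
    rw [zero_mul, add_zero]
    exact setIntegral_mono_set (h.integrableOn_Ioi hg hδ).abs
      (ae_of_all _ fun _ => abs_nonneg _) Ioc_subset_Ioi_self.eventuallyLE

lemma DecayBound.exists_abs_bop_le (hF : IsCDF F) (hε₀ : 0 ≤ ε) (hε₁ : ε < 1) (hC₀ : 0 ≤ C₀)
    (htail : ∀ z, 0 < z → Fbar F z ≤ C₀ * z ^ (-ε)) (hg : ContinuousOn g (Ici 0))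
    (h : DecayBound g δ) (hδ₀ : 0 ≤ δ) (hδ₁ : δ ≠ 1) :
    ∃ K₁ K₂, ∀ t, 0 < t → |Bop F g t| ≤ K₁ * t ^ (-ε) + K₂ * t ^ (-(ε + δ - 1)) := by
  obtain ⟨K₁, K₂, hK⟩ := h.exists_integral_abs_le hg hδ₁
  obtain ⟨D, hD⟩ := h
  refine ⟨C₀ * K₁ / 2 ^ (-ε), (D * C₀ / (1 - ε) + C₀ * K₂) / 2 ^ (-(ε + δ - 1)),
    fun t ht => ?_⟩
  have ht2 : 0 < t / 2 := half_pos ht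
  have hhalf (c : ℝ) : (t / 2) ^ c = t ^ c / 2 ^ c := Real.div_rpow ht.le zero_le_two c
  calc |Bop F g t|
      ≤ D * C₀ / (1 - ε) * (t / 2) ^ (-(ε + δ - 1))
        + C₀ * (t / 2) ^ (-ε) * (K₁ + K₂ * (t / 2) ^ (1 - δ)) := by
        refine (abs_bop_le_head_add_tail hF hg ht).trans (add_le_add
          (integral_head_le hF hε₁ htail ht hδ₀ hD) ?_)
        exact (integral_tail_le hF hε₀ hC₀ htail hg ht).trans
          (mul_le_mul_of_nonneg_left (hK _ ht2) (by positivity))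
    _ = C₀ * K₁ * (t / 2) ^ (-ε)
        + (D * C₀ / (1 - ε) + C₀ * K₂) * (t / 2) ^ (-(ε + δ - 1)) := by
        rw [show -(ε + δ - 1) = -ε + (1 - δ) by ring, Real.rpow_add ht2]
        ring
    _ = _ := by rw [hhalf, hhalf]; ring

end Convolution

lemma exists_bound_of_abs_le_add_half_sup {g : ℝ → ℝ} {A U : ℝ} (hg : ContinuousOn g (Ici 0))
    (h : ∀ w, U ≤ w → ∀ N, (∀ v ∈ Icc 0 w, |g v| ≤ N) → |g w| ≤ A + N / 2) :
    ∃ M, ∀ v, 0 ≤ v → |g v| ≤ M := by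
  obtain ⟨N₀, hN₀⟩ := isCompact_Icc.exists_bound_of_continuousOn
    (hg.mono (Icc_subset_Ici_self : Icc 0 U ⊆ Ici 0))
  refine ⟨max N₀ (2 * A), fun v hv => ?_⟩
  obtain ⟨w, hw, hmax⟩ := isCompact_Icc.exists_isMaxOn ⟨v, hv, le_rfl⟩
    (hg.mono (Icc_subset_Ici_self : Icc 0 v ⊆ Ici 0)).abs
  have hvw : |g v| ≤ |g w| := hmax ⟨hv, le_rfl⟩
  rcases le_total w U with hwU | hUw
  · exact hvw.trans ((hN₀ w ⟨hw.1, hwU⟩).trans (le_max_left _ _))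
  · have := h w hUw |g w| fun v' hv' => hmax ⟨hv'.1, hv'.2.trans hw.2⟩
    exact hvw.trans (le_max_of_le_right (by linarith))

section Volterra

variable {γ α μ Φ₀ ε C₀ : ℝ} {F g : ℝ → ℝ}

lemma IsVolterraSol.abs_le_of_abs_bop_le (hg : IsVolterraSol γ α μ Φ₀ F g) (hα : 0 ≤ α)
    (hF : IsCDF F) (htail : ∀ z, 0 < z → Fbar F z ≤ C₀ * z ^ (-ε)) (hγε : ε < γ - 1)
    {b K₁ K₂ u : ℝ} (hb : b < γ - 1) (hu : 0 < u)
    (hB : ∀ t ∈ Ioc 0 u, |Bop F g t| ≤ K₁ * t ^ (-ε) + K₂ * t ^ (-b)) :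
    |g u| ≤ |μ| * (|Φ₀| * C₀ + K₁) / (γ - 1 - ε) * u ^ (-(ε + 1))
      + |μ| * K₂ / (γ - 1 - b) * u ^ (-(b + 1)) := by
  rw [hg.2 u hu]
  refine abs_volterra_integral_le hα hu hγε hb fun t ht => ?_
  calc |Φ₀ * Fbar F t + Bop F g t| ≤ |Φ₀| * Fbar F t + |Bop F g t| := by
        simpa only [abs_mul, abs_of_nonneg (hF.fbar_nonneg t)] using
          abs_add_le (Φ₀ * Fbar F t) (Bop F g t)
    _ ≤ |Φ₀| * (C₀ * t ^ (-ε)) + (K₁ * t ^ (-ε) + K₂ * t ^ (-b)) := by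
        gcongr
        · exact htail t ht.1
        · exact hB t ht
    _ = (|Φ₀| * C₀ + K₁) * t ^ (-ε) + K₂ * t ^ (-b) := by ring

lemma IsVolterraSol.decayBound_zero (hg : IsVolterraSol γ α μ Φ₀ F g) (hα : 0 ≤ α)
    (hF : IsCDF F) (hε₀ : 0 < ε) (hε₁ : ε < 1) (hC₀ : 0 ≤ C₀)
    (htail : ∀ z, 0 < z → Fbar F z ≤ C₀ * z ^ (-ε)) (hγε : ε < γ - 1) : DecayBound g 0 := by
  obtain ⟨A, B, hA, hcrude⟩ : ∃ A B, 0 ≤ A ∧ ∀ w, 0 < w → ∀ N, (∀ v ∈ Icc 0 w, |g v| ≤ N) →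
      |g w| ≤ A * w ^ (-(ε + 1)) + N * (B * w ^ (-ε)) := by
    refine ⟨|μ| * |Φ₀| * C₀ / (γ - 1 - ε), |μ| * C₀ / (1 - ε) / (γ - ε),
      div_nonneg (by positivity) (by linarith), fun w hw N hN => ?_⟩
    have := hg.abs_le_of_abs_bop_le hα hF htail hγε (b := ε - 1) (K₁ := 0) (by linarith) hw
      fun t ht => by
        rw [zero_mul, zero_add]
        exact abs_bop_le_of_abs_le hF hε₁ htail ht.1.le
          fun v hv => hN v ⟨hv.1, hv.2.trans ht.2⟩
    rw [show -(ε - 1 + 1) = -ε by ring, show γ - 1 - (ε - 1) = γ - ε by ring] at this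
    exact this.trans_eq (by ring)
  obtain ⟨U, hU⟩ := eventually_atTop.1 ((eventually_ge_atTop 1).and
    (((tendsto_rpow_neg_atTop hε₀).const_mul B).eventually (ge_mem_nhds (by
      rw [mul_zero]; exact one_half_pos))))
  obtain ⟨M, hM⟩ := exists_bound_of_abs_le_add_half_sup hg.1 (A := A) (U := U)
    fun w hw N hN => by
      obtain ⟨hw1, hwB⟩ := hU w hw
      have hN₀ : 0 ≤ N := (abs_nonneg _).trans (hN w ⟨by linarith, le_rfl⟩)
      calc |g w| ≤ A * w ^ (-(ε + 1)) + N * (B * w ^ (-ε)) :=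
            hcrude w (by linarith) N hN
        _ ≤ A * 1 + N * (1 / 2) := by
            gcongr
            exact Real.rpow_le_one_of_one_le_of_nonpos hw1 (by linarith)
        _ = A + N / 2 := by ring
  exact ⟨M, fun v hv => by simpa using hM v hv.le⟩

lemma IsVolterraSol.decayBound_of_decayBound (hg : IsVolterraSol γ α μ Φ₀ F g) (hα : 0 ≤ α)
    (hF : IsCDF F) (hε₀ : 0 ≤ ε) (hε₁ : ε < 1) (hC₀ : 0 ≤ C₀)
    (htail : ∀ z, 0 < z → Fbar F z ≤ C₀ * z ^ (-ε)) (hγε : ε < γ - 1) (h₀ : DecayBound g 0)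
    {δ m : ℝ} (h : DecayBound g δ) (hδ₀ : 0 ≤ δ) (hδ₁ : δ ≠ 1) (hδγ : δ < γ - ε)
    (hm₀ : 0 ≤ m) (hm₁ : m ≤ ε + 1) (hm₂ : m ≤ ε + δ) : DecayBound g m := by
  obtain ⟨K₁, K₂, hK⟩ := h.exists_abs_bop_le hF hε₀ hε₁ hC₀ htail hg.1 hδ₀ hδ₁
  exact h₀.of_abs_le_add (fun u hu => hg.abs_le_of_abs_bop_le hα hF htail hγε (by linarith) hu
    fun t ht => hK t ht.1) hm₀ hm₁ (by linarith)

lemma IsVolterraSol.decayBound_of_lt_one (hg : IsVolterraSol γ α μ Φ₀ F g) (hα : 0 ≤ α)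
    (hF : IsCDF F) (hε₀ : 0 < ε) (hε₁ : ε < 1) (hC₀ : 0 ≤ C₀)
    (htail : ∀ z, 0 < z → Fbar F z ≤ C₀ * z ^ (-ε)) (hγε : ε < γ - 1) {δ : ℝ} (hδ₀ : 0 ≤ δ)
    (hδ₁ : δ < 1) : DecayBound g δ := by
  have h₀ := hg.decayBound_zero hα hF hε₀ hε₁ hC₀ htail hγε
  suffices ∀ n : ℕ, ∀ δ, 0 ≤ δ → δ < 1 → δ ≤ n * ε → DecayBound g δ by
    obtain ⟨n, hn⟩ := exists_nat_gt (δ / ε)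
    exact this n δ hδ₀ hδ₁ ((div_lt_iff₀ hε₀).1 hn).le
  intro n
  induction n with
  | zero =>
    intro δ hδ₀ _ hδn
    rwa [le_antisymm (by simpa using hδn) hδ₀]
  | succ n ih =>
    intro δ hδ₀ hδ₁ hδn
    have hprev : max (δ - ε) 0 < 1 := max_lt (by linarith) one_pos
    refine hg.decayBound_of_decayBound hα hF hε₀.le hε₁ hC₀ htail hγε h₀
      (ih _ (le_max_right _ _) hprev (max_le (by push_cast at hδn; linarith) (by positivity)))
      (le_max_right _ _) hprev.ne (by linarith) hδ₀ (by linarith) ?_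
    linarith [le_max_left (δ - ε) 0]

lemma IsVolterraSol.decayBound_one_add (hg : IsVolterraSol γ α μ Φ₀ F g) (hα : 0 ≤ α)
    (hF : IsCDF F) (hε₀ : 0 < ε) (hε₁ : ε < 1) (hC₀ : 0 ≤ C₀)
    (htail : ∀ z, 0 < z → Fbar F z ≤ C₀ * z ^ (-ε)) (hγε : ε < γ - 1) :
    DecayBound g (1 + ε) := by
  have h₀ := hg.decayBound_zero hα hF hε₀ hε₁ hC₀ htail hγε
  have h₁ : DecayBound g (1 - ε / 2) :=
    hg.decayBound_of_lt_one hα hF hε₀ hε₁ hC₀ htail hγε (by linarith) (by linarith)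
  set δ₂ := min (1 + ε / 2) ((1 + (γ - ε)) / 2)
  have hδ₂ : 1 < δ₂ := lt_min (by linarith) (by linarith)
  have hδ₂γ : δ₂ < γ - ε := (min_le_right _ _).trans_lt (by linarith)
  have h₂ : DecayBound g δ₂ :=
    hg.decayBound_of_decayBound hα hF hε₀.le hε₁ hC₀ htail hγε h₀ h₁ (by linarith)
      (by linarith : 1 - ε / 2 < 1).ne (by linarith) (by linarith)
      (by linarith [min_le_left (1 + ε / 2) ((1 + (γ - ε)) / 2)])
      (by linarith [min_le_left (1 + ε / 2) ((1 + (γ - ε)) / 2)])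
  exact hg.decayBound_of_decayBound hα hF hε₀.le hε₁ hC₀ htail hγε h₀ h₂ (by linarith)
    hδ₂.ne' hδ₂γ (by linarith) (by linarith) (by linarith)

end Volterra

theorem stmt8_general (γ α μ : ℝ) (hα : 0 < α)
    (F : ℝ → ℝ) (hF : IsCDF F) (Φ₀ : ℝ)
    (ε C₀ : ℝ) (hε : ε ∈ Set.Ioo (0:ℝ) 1) (hγε : 0 < γ - 1 - ε) (hC₀ : 0 < C₀)
    (htail : ∀ z : ℝ, 0 < z → Fbar F z ≤ C₀ * z ^ (-ε))
    (g : ℝ → ℝ) (hg : IsVolterraSol γ α μ Φ₀ F g) :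
    (∃ C : ℝ, 0 < C ∧ ∃ U : ℝ, 0 < U ∧
      ∀ u : ℝ, U ≤ u → |g u| ≤ C * u ^ (-1 - ε)) ∧
    IntegrableOn g (Set.Ioi 0) volume := by
  have hdecay := hg.decayBound_one_add hα.le hF hε.1 hε.2 hC₀.le htail (by linarith)
  refine ⟨?_, hdecay.integrableOn_Ioi hg.1 (by linarith [hε.1])⟩
  obtain ⟨D, hD⟩ := hdecay
  refine ⟨max D 1, by positivity, 1, one_pos, fun u hu => ?_⟩
  rw [← neg_add']
  exact (hD u (by linarith)).trans
    (mul_le_mul_of_nonneg_right (le_max_left _ _) (by positivity))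

theorem stmt8 (γ α μ : ℝ) (hγ : 1 < γ) (hα : 0 < α) (hμ : 0 < μ)
    (F : ℝ → ℝ) (hF : IsCDF F) (Φ₀ : ℝ) (hΦ₀ : 0 < Φ₀)
    (ε C₀ : ℝ) (hε : ε ∈ Set.Ioo (0:ℝ) 1) (hγε : 0 < γ - 1 - ε) (hC₀ : 0 < C₀)
    (htail : ∀ z : ℝ, 0 < z → Fbar F z ≤ C₀ * z ^ (-ε))
    (g : ℝ → ℝ) (hg : IsVolterraSol γ α μ Φ₀ F g) :
    (∃ C : ℝ, 0 < C ∧ ∃ U : ℝ, 0 < U ∧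
      ∀ u : ℝ, U ≤ u → |g u| ≤ C * u ^ (-1 - ε)) ∧
    IntegrableOn g (Set.Ioi 0) volume :=
  stmt8_general γ α μ hα F hF Φ₀ ε C₀ hε hγε hC₀ htail g hg
end

section
/- C¹-smoothness under continuity of F: suppose in addition that the distribution function F is continuous on ℝ, and let g be a continuous bounded solution of the Volterra equation (★) on [0, ∞). Then g is continuously differentiable on (0, ∞), and for every u > 0 the first-order integro-differential equation u² g′(u) + (γ u + α) g(u) = μ Φ₀ F̄(u) + μ (Bg)(u) holds. -/
open MeasureTheory Filter Set Topology

/-!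
On `(0, ∞)` a solution is `g = P · ∫₀ᵘ k Ψ` with `P(u) = μ u^{-γ} e^{α/u}`,
`k(t) = t^{γ-2} e^{-α/t}` and source `Ψ = Φ₀ F̄ + B g`. Continuity of `F` makes `B g`, hence `Ψ`,
continuous on `[0, ∞)`, and since `α > 0` the kernel `k` vanishes at `0⁺`, so `k Ψ` is integrable
near `0` and its primitive has derivative `k Ψ` at every `u > 0`. The product rule, with
`P' = -(γ u + α) P / u²` and `P k = μ / u²`, gives the equation, and the resulting formula for
`g'` is visibly continuous.
-/

open Real

lemma continuous_Fbar {F : ℝ → ℝ} (hF : Continuous F) : Continuous (Fbar F) :=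
  continuous_const.sub hF

lemma Bop_congr {F g₁ g₂ : ℝ → ℝ} (h : EqOn g₁ g₂ (Ici 0)) {t : ℝ} (ht : 0 ≤ t) :
    Bop F g₁ t = Bop F g₂ t := by
  refine intervalIntegral.integral_congr fun y hy => ?_
  rw [uIcc_of_le ht] at hy
  simp only [h (show 0 ≤ t - y by linarith [hy.2])]

lemma continuous_Bop {F g : ℝ → ℝ} (hF : Continuous F) (hg : Continuous g) :
    Continuous (Bop F g) :=
  intervalIntegral.continuous_parametric_intervalIntegral_of_continuous
    (f := fun t y => g (t - y) * Fbar F y)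
    ((hg.comp (continuous_fst.sub continuous_snd)).mul ((continuous_Fbar hF).comp continuous_snd))
    continuous_id

lemma continuousOn_Bop {F g : ℝ → ℝ} (hF : Continuous F) (hg : ContinuousOn g (Ici 0)) :
    ContinuousOn (Bop F g) (Ici 0) := by
  have hext : Continuous fun s => g (max s 0) :=
    hg.comp_continuous (continuous_id.max continuous_const) fun s => le_max_right s 0
  refine (continuous_Bop hF hext).continuousOn.congr fun t ht => Bop_congr (fun s hs => ?_) ht
  simp only [max_eq_left (mem_Ici.mp hs)]

lemma intervalIntegrable_of_continuousOn_Ioc_of_tendsto {f : ℝ → ℝ} {a b L : ℝ} (hab : a ≤ b)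
    (hf : ContinuousOn f (Ioc a b)) (hlim : Tendsto f (𝓝[>] a) (𝓝 L)) :
    IntervalIntegrable f volume a b := by
  classical
  have hext : ContinuousOn (Function.update f a L) (Icc a b) := by
    intro t ht
    rcases eq_or_lt_of_le ht.1 with rfl | hat
    · rw [continuousWithinAt_update_same, Icc_sdiff_left]
      exact hlim.mono_left (nhdsWithin_mono _ Ioc_subset_Ioi_self)
    · rw [continuousWithinAt_update_of_ne hat.ne', ← continuousWithinAt_sdiff_singleton (y := a),
        Icc_sdiff_left]
      exact hf t ⟨hat, ht.2⟩
  refine (hext.intervalIntegrable_of_Icc hab).congr_uIoo fun t ht => ?_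
  rw [uIoo_of_le hab] at ht
  exact Function.update_of_ne ht.1.ne' _ _

lemma continuousOn_rpow_mul_exp_neg_div (a α : ℝ) :
    ContinuousOn (fun t : ℝ => t ^ a * exp (-α / t)) (Ioi 0) := fun _ ht =>
  ((continuousAt_id.rpow_const (Or.inl (ne_of_gt ht))).mul
    (continuousAt_const.div continuousAt_id (ne_of_gt ht)).rexp).continuousWithinAt

lemma tendsto_rpow_mul_exp_neg_div_nhdsGT_zero (a : ℝ) {α : ℝ} (hα : 0 < α) :
    Tendsto (fun t : ℝ => t ^ a * exp (-α / t)) (𝓝[>] 0) (𝓝 0) := by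
  refine ((tendsto_rpow_mul_exp_neg_mul_atTop_nhds_zero (-a) α hα).comp
    tendsto_inv_nhdsGT_zero).congr' ?_
  filter_upwards [self_mem_nhdsWithin] with t (ht : 0 < t)
  simp only [Function.comp, inv_rpow ht.le, ← rpow_neg ht.le, neg_neg, ← div_eq_mul_inv]

/-- The right-hand side of (★); a solution satisfies `g = volterraRHS γ α μ (Φ₀ F̄ + B g)`
on `(0, ∞)`. -/
noncomputable def volterraRHS (γ α μ : ℝ) (Ψ : ℝ → ℝ) (u : ℝ) : ℝ :=
  μ * u ^ (-γ) * exp (α / u) * ∫ t in (0:ℝ)..u, t ^ (γ - 2) * exp (-α / t) * Ψ t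

lemma hasDerivAt_rpow_neg_mul_exp_div (γ α μ : ℝ) {u : ℝ} (hu : 0 < u) :
    HasDerivAt (fun v : ℝ => μ * v ^ (-γ) * exp (α / v))
      (-(γ * u + α) / u ^ 2 * (μ * u ^ (-γ) * exp (α / u))) u := by
  have hpow := (hasDerivAt_rpow_const (p := -γ) (Or.inl hu.ne')).const_mul μ
  have hexp := ((hasDerivAt_const u α).fun_div (hasDerivAt_id' u) hu.ne').exp
  refine (hpow.fun_mul hexp).congr_deriv ?_
  rw [rpow_sub hu, rpow_one]
  field_simp
  ring

lemma rpow_neg_mul_exp_div_mul_rpow_mul_exp_neg_div (γ α : ℝ) {u : ℝ} (hu : 0 < u) :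
    u ^ (-γ) * exp (α / u) * (u ^ (γ - 2) * exp (-α / u)) = (u ^ 2)⁻¹ := by
  rw [mul_mul_mul_comm, ← rpow_add hu, ← exp_add, neg_div, add_neg_cancel, exp_zero, mul_one,
    show -γ + (γ - 2) = -(2 : ℕ) by push_cast; ring, rpow_neg hu.le, rpow_natCast]

lemma hasDerivAt_volterraRHS {γ α μ : ℝ} {Ψ : ℝ → ℝ} (hα : 0 < α) (hΨ : ContinuousOn Ψ (Ici 0))
    {u : ℝ} (hu : 0 < u) :
    HasDerivAt (volterraRHS γ α μ Ψ)
      ((μ * Ψ u - (γ * u + α) * volterraRHS γ α μ Ψ u) / u ^ 2) u := by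
  set k : ℝ → ℝ := fun t => t ^ (γ - 2) * exp (-α / t) * Ψ t with hk_def
  have hk : ContinuousOn k (Ioi 0) :=
    (continuousOn_rpow_mul_exp_neg_div _ _).mul (hΨ.mono Ioi_subset_Ici_self)
  have hk_zero : Tendsto k (𝓝[>] 0) (𝓝 0) := by
    simpa using (tendsto_rpow_mul_exp_neg_div_nhdsGT_zero (γ - 2) hα).mul
      ((hΨ 0 (mem_Ici.2 le_rfl)).tendsto.mono_left (nhdsWithin_mono _ Ioi_subset_Ici_self))
  have hint : IntervalIntegrable k volume 0 u :=
    intervalIntegrable_of_continuousOn_Ioc_of_tendsto hu.le (hk.mono Ioc_subset_Ioi_self) hk_zero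
  have hprim := intervalIntegral.integral_hasDerivAt_right hint
    (hk.stronglyMeasurableAtFilter isOpen_Ioi u hu) (hk.continuousAt (Ioi_mem_nhds hu))
  refine ((hasDerivAt_rpow_neg_mul_exp_div γ α μ hu).fun_mul hprim).congr_deriv ?_
  have hsource : μ * u ^ (-γ) * exp (α / u) * k u = μ * Ψ u / u ^ 2 := by
    rw [mul_div_assoc, div_eq_mul_inv _ (u ^ 2),
      ← rpow_neg_mul_exp_div_mul_rpow_mul_exp_neg_div γ α hu, hk_def]
    ring
  rw [hsource, volterraRHS]
  ring

theorem stmt17_general (γ α μ : ℝ) (hα : 0 < α)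
    (F : ℝ → ℝ) (hFc : Continuous F) (Φ₀ : ℝ)
    (g : ℝ → ℝ) (hg : IsVolterraSol γ α μ Φ₀ F g) :
    ∃ g' : ℝ → ℝ, ContinuousOn g' (Set.Ioi 0) ∧
      ∀ u : ℝ, 0 < u → HasDerivAt g (g' u) u ∧
        u ^ 2 * g' u + (γ * u + α) * g u = μ * Φ₀ * Fbar F u + μ * Bop F g u := by
  obtain ⟨hgc, hsol⟩ := hg
  set Ψ : ℝ → ℝ := fun t => Φ₀ * Fbar F t + Bop F g t
  have hΨ : ContinuousOn Ψ (Ici 0) :=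
    (continuous_const.mul (continuous_Fbar hFc)).continuousOn.add (continuousOn_Bop hFc hgc)
  refine ⟨fun u => (μ * Ψ u - (γ * u + α) * g u) / u ^ 2, ?_, fun u hu => ⟨?_, ?_⟩⟩
  · have hΨ' := hΨ.mono Ioi_subset_Ici_self
    have hg' := hgc.mono Ioi_subset_Ici_self
    exact ContinuousOn.div (by fun_prop) (by fun_prop) fun u hu => pow_ne_zero 2 (ne_of_gt hu)
  · have hg_eq : g =ᶠ[𝓝 u] volterraRHS γ α μ Ψ :=
      eventually_of_mem (Ioi_mem_nhds hu) fun v hv => hsol v hv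
    simpa only [← hg_eq.eq_of_nhds] using
      (hasDerivAt_volterraRHS hα hΨ hu).congr_of_eventuallyEq hg_eq
  · field_simp
    ring

theorem stmt17 (γ α μ : ℝ) (hγ : 1 < γ) (hα : 0 < α) (hμ : 0 < μ)
    (F : ℝ → ℝ) (hF : IsCDF F) (hFc : Continuous F) (Φ₀ : ℝ) (hΦ₀ : 0 < Φ₀)
    (g : ℝ → ℝ) (hg : IsVolterraSol γ α μ Φ₀ F g)
    (hbd : ∃ M : ℝ, ∀ u : ℝ, 0 ≤ u → |g u| ≤ M) :
    ∃ g' : ℝ → ℝ, ContinuousOn g' (Set.Ioi 0) ∧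
      ∀ u : ℝ, 0 < u → HasDerivAt g (g' u) u ∧
        u ^ 2 * g' u + (γ * u + α) * g u = μ * Φ₀ * Fbar F u + μ * Bop F g u :=
  stmt17_general γ α μ hα F hFc Φ₀ g hg
end

section
/- Integration by parts for the jump term: let ν be a Borel probability measure on ℝ concentrated on (0, ∞), with distribution function F(x) := ν((−∞, x]) and tail F̄ := 1 − F. Let Φ₀ ∈ ℝ, let g : [0, ∞) → ℝ be continuous, and define Φ : ℝ → ℝ by Φ(x) := 0 for x < 0 and Φ(x) := Φ₀ + ∫₀ˣ g(y) dy for x ≥ 0. Then for every u > 0, ∫_{(0,∞)} (Φ(u) − Φ(u−y)) dν(y) = Φ₀ F̄(u) + ∫₀ᵘ g(y) F̄(u−y) dy, provided ν({u}) = 0 (in particular, for every u > 0 whenever F is continuous). -/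
open MeasureTheory Filter Set Topology

/-!
For `y > 0` the increment `Φ u - Φ (u - y)` is `Φ₀ 𝟙{y > u} + ∫₀ᵘ g x 𝟙{x > u - y} dx`: the
constant `Φ₀` is lost only when `u - y` leaves `[0, ∞)`. Integrating in `ν` and exchanging the
order of integration, the kernel contributes `ν (Ioi (u - x)) = F̄ (u - x)`.
-/

section Kernel

variable {ν μ : Measure ℝ} [IsFiniteMeasure ν] [SFinite μ] {g : ℝ → ℝ}

lemma integrable_indicator_Ioi_sub (hg : Integrable g μ) (c : ℝ) :
    Integrable (fun p : ℝ × ℝ => (Ioi (c - p.1)).indicator g p.2) (ν.prod μ) := by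
  have hset : MeasurableSet {p : ℝ × ℝ | c - p.1 < p.2} :=
    measurableSet_lt (measurable_const.sub measurable_fst) measurable_snd
  exact (hg.comp_snd ν).indicator hset

lemma integral_integral_indicator_Ioi_sub (hg : Integrable g μ) (c : ℝ) :
    ∫ y, ∫ x, (Ioi (c - y)).indicator g x ∂μ ∂ν = ∫ x, g x * ν.real (Ioi (c - x)) ∂μ := by
  rw [integral_integral_swap (integrable_indicator_Ioi_sub hg c)]
  refine integral_congr_ae (ae_of_all _ fun x => ?_)
  have hind : (fun y => (Ioi (c - y)).indicator g x) = (Ioi (c - x)).indicator (fun _ => g x) := by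
    ext y
    simp only [indicator_apply, mem_Ioi, sub_lt_comm]
  simp only [hind, integral_indicator_const _ measurableSet_Ioi, smul_eq_mul, mul_comm]

end Kernel

lemma measureReal_Ioi_eq_Fbar (ν : Measure ℝ) [IsProbabilityMeasure ν] {F : ℝ → ℝ}
    (hF : ∀ x, F x = (ν (Iic x)).toReal) (x : ℝ) : ν.real (Ioi x) = Fbar F x := by
  rw [← compl_Iic, probReal_compl_eq_one_sub measurableSet_Iic, Fbar, hF, measureReal_def]

lemma sub_eq_indicator_add_setIntegral_indicator {Φ g : ℝ → ℝ} {Φ₀ u y : ℝ}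
    (hΦneg : ∀ x, x < 0 → Φ x = 0) (hΦpos : ∀ x, 0 ≤ x → Φ x = Φ₀ + ∫ t in (0:ℝ)..x, g t)
    (hg : IntervalIntegrable g volume 0 u) (hu : 0 ≤ u) (hy : 0 ≤ y) :
    Φ u - Φ (u - y) =
      (Ioi u).indicator (fun _ => Φ₀) y + ∫ x in Ioc 0 u, (Ioi (u - y)).indicator g x := by
  rw [integral_indicator measurableSet_Ioi, Measure.restrict_restrict measurableSet_Ioi,
    hΦpos u hu]
  rcases le_or_gt y u with hyu | huy
  · have hinter : Ioi (u - y) ∩ Ioc 0 u = Ioc (u - y) u := by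
      ext t
      simp only [mem_inter_iff, mem_Ioi, mem_Ioc]
      constructor
      · rintro ⟨h1, _, h3⟩; exact ⟨h1, h3⟩
      · rintro ⟨h1, h2⟩; exact ⟨h1, by linarith, h2⟩
    rw [hΦpos (u - y) (by linarith), hinter, ← intervalIntegral.integral_of_le (by linarith),
      ← intervalIntegral.integral_interval_sub_left (c := u - y) hg (hg.mono_set ?_),
      indicator_of_notMem (by simpa using hyu)]
    · ring
    · rw [uIcc_of_le hu, uIcc_of_le (by linarith)]
      exact Icc_subset_Icc_right (by linarith)
  · have hinter : Ioi (u - y) ∩ Ioc 0 u = Ioc 0 u :=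
      inter_eq_right.2 fun t ht => show u - y < t by linarith [ht.1]
    rw [hΦneg (u - y) (by linarith), hinter, ← intervalIntegral.integral_of_le hu,
      indicator_of_mem (show y ∈ Ioi u from huy)]
    ring

theorem stmt18_general (ν : Measure ℝ) [IsProbabilityMeasure ν]
    (F : ℝ → ℝ) (hF : ∀ x : ℝ, F x = (ν (Set.Iic x)).toReal)
    (Φ₀ : ℝ) (g : ℝ → ℝ) (hg : ContinuousOn g (Set.Ici 0))
    (Φ : ℝ → ℝ) (hΦneg : ∀ x : ℝ, x < 0 → Φ x = 0)
    (hΦpos : ∀ x : ℝ, 0 ≤ x → Φ x = Φ₀ + ∫ y in (0:ℝ)..x, g y)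
    (u : ℝ) (hu : 0 < u) :
    ∫ y in Set.Ioi (0:ℝ), (Φ u - Φ (u - y)) ∂ν =
      Φ₀ * Fbar F u + ∫ y in (0:ℝ)..u, g y * Fbar F (u - y) := by
  have hgu : IntegrableOn g (Ioc 0 u) :=
    ((hg.mono Icc_subset_Ici_self).integrableOn_Icc).mono_set Ioc_subset_Icc_self
  have hkernel : ∀ y ∈ Ioi (0:ℝ), Φ u - Φ (u - y) =
      (Ioi u).indicator (fun _ => Φ₀) y + ∫ x in Ioc 0 u, (Ioi (u - y)).indicator g x :=
    fun y hy => sub_eq_indicator_add_setIntegral_indicator hΦneg hΦpos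
      ((intervalIntegrable_iff_integrableOn_Ioc_of_le hu.le).2 hgu) hu.le (le_of_lt hy)
  have hjump : ∫ y in Ioi 0, (Ioi u).indicator (fun _ => Φ₀) y ∂ν = Φ₀ * Fbar F u := by
    rw [integral_indicator_const _ measurableSet_Ioi, measureReal_restrict_apply measurableSet_Ioi,
      inter_eq_left.2 (Ioi_subset_Ioi hu.le), measureReal_Ioi_eq_Fbar ν hF, smul_eq_mul, mul_comm]
  have hcont : ∫ y in Ioi 0, (∫ x in Ioc 0 u, (Ioi (u - y)).indicator g x) ∂ν =
      ∫ y in (0:ℝ)..u, g y * Fbar F (u - y) := by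
    rw [integral_integral_indicator_Ioi_sub hgu, intervalIntegral.integral_of_le hu.le]
    refine setIntegral_congr_fun measurableSet_Ioc fun x hx => ?_
    rw [measureReal_restrict_apply measurableSet_Ioi,
      inter_eq_left.2 (Ioi_subset_Ioi (by linarith [hx.2])), measureReal_Ioi_eq_Fbar ν hF]
  rw [setIntegral_congr_fun measurableSet_Ioi hkernel,
    integral_add ((integrable_const Φ₀).indicator measurableSet_Ioi)
      (integrable_indicator_Ioi_sub hgu u).integral_prod_left, hjump, hcont]

theorem stmt18 (ν : Measure ℝ) [IsProbabilityMeasure ν] (hν : ν (Set.Ioi 0) = 1)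
    (F : ℝ → ℝ) (hF : ∀ x : ℝ, F x = (ν (Set.Iic x)).toReal)
    (Φ₀ : ℝ) (g : ℝ → ℝ) (hg : ContinuousOn g (Set.Ici 0))
    (Φ : ℝ → ℝ) (hΦneg : ∀ x : ℝ, x < 0 → Φ x = 0)
    (hΦpos : ∀ x : ℝ, 0 ≤ x → Φ x = Φ₀ + ∫ y in (0:ℝ)..x, g y)
    (u : ℝ) (hu : 0 < u) (hatom : ν {u} = 0) :
    ∫ y in Set.Ioi (0:ℝ), (Φ u - Φ (u - y)) ∂ν =
      Φ₀ * Fbar F u + ∫ y in (0:ℝ)..u, g y * Fbar F (u - y) :=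
  stmt18_general ν F hF Φ₀ g hg Φ hΦneg hΦpos u hu
end
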